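/- arXiv:2312.13074 — 7 statements merged into one kernel-verified Lean document; each statement's English description precedes it below -/
import Mathlib

section
/- Let B be a bimonad on a monoidal category C acting on a right C-module category M, and let (K, δ) be a comodule monad on M over B. Then the Eilenberg–Moore category M^K is a right module category over C^B, with action of a B-algebra (x, θ_x) on a K-algebra (m, θ_m) given by (m ◁ x, (θ_m ◁ θ_x) ∘ δ_{m,x}), such that the forgetful functor U^K : M^K → M is a strict comodule functor over the strict monoidal forgetful functor U^B : C^B → C. -/
open CategoryTheory Category MonoidalCategory

universe v₁ v₂ u₁ u₂

/-- A (strict) right module category of a monoidal category `C`. -/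
structure RAct (C : Type u₁) [Category.{v₁} C] [MonoidalCategory C]
    (M : Type u₂) [Category.{v₂} M] where
  smul : M → C → M
  smulHom : ∀ {m m' : M} {x x' : C}, (m ⟶ m') → (x ⟶ x') → (smul m x ⟶ smul m' x')
  smulHom_id : ∀ (m : M) (x : C), smulHom (𝟙 m) (𝟙 x) = 𝟙 (smul m x)
  smulHom_comp :
    ∀ {m m' m'' : M} {x x' x'' : C} (f : m ⟶ m') (f' : m' ⟶ m'')
      (g : x ⟶ x') (g' : x' ⟶ x''),
      smulHom (f ≫ f') (g ≫ g') = smulHom f g ≫ smulHom f' g'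
  assoc : ∀ (m : M) (x y : C), smul m (x ⊗ y) = smul (smul m x) y
  unit : ∀ (m : M), smul m (𝟙_ C) = m
  assoc_hom :
    ∀ {m m' : M} {x x' y y' : C} (f : m ⟶ m') (g : x ⟶ x') (h : y ⟶ y'),
      smulHom f (g ⊗ₘ h) =
        eqToHom (assoc m x y) ≫ smulHom (smulHom f g) h ≫ eqToHom (assoc m' x' y').symm
  unit_hom :
    ∀ {m m' : M} (f : m ⟶ m'),
      smulHom f (𝟙 (𝟙_ C)) = eqToHom (unit m) ≫ f ≫ eqToHom (unit m').symm

/-- An opmonoidal structure on a functor between monoidal categories. -/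
structure OpmonStr {C : Type u₁} [Category.{v₁} C] [MonoidalCategory C]
    {D : Type u₂} [Category.{v₂} D] [MonoidalCategory D] (F : C ⥤ D) where
  d : ∀ x y : C, F.obj (x ⊗ y) ⟶ F.obj x ⊗ F.obj y
  e : F.obj (𝟙_ C) ⟶ 𝟙_ D
  d_natural : ∀ {x x' y y' : C} (f : x ⟶ x') (g : y ⟶ y'),
    F.map (f ⊗ₘ g) ≫ d x' y' = d x y ≫ (F.map f ⊗ₘ F.map g)
  coassoc : ∀ x y z : C,
    d (x ⊗ y) z ≫ (d x y ⊗ₘ 𝟙 (F.obj z)) ≫ (α_ (F.obj x) (F.obj y) (F.obj z)).hom =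
      F.map (α_ x y z).hom ≫ d x (y ⊗ z) ≫ (𝟙 (F.obj x) ⊗ₘ d y z)
  counit_left : ∀ x : C,
    d (𝟙_ C) x ≫ (e ⊗ₘ 𝟙 (F.obj x)) ≫ (λ_ (F.obj x)).hom = F.map (λ_ x).hom
  counit_right : ∀ x : C,
    d x (𝟙_ C) ≫ (𝟙 (F.obj x) ⊗ₘ e) ≫ (ρ_ (F.obj x)).hom = F.map (ρ_ x).hom

/-- A bimonad structure on a given monad `t` on a monoidal category. -/
structure BimonadStr {C : Type u₁} [Category.{v₁} C] [MonoidalCategory C]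
    (t : Monad C) where
  op : OpmonStr t.toFunctor
  mul_opmon : ∀ x y : C,
    t.μ.app (x ⊗ y) ≫ op.d x y =
      t.map (op.d x y) ≫ op.d (t.obj x) (t.obj y) ≫ (t.μ.app x ⊗ₘ t.μ.app y)
  mul_counit : t.μ.app (𝟙_ C) ≫ op.e = t.map op.e ≫ op.e
  unit_opmon : ∀ x y : C, t.η.app (x ⊗ y) ≫ op.d x y = t.η.app x ⊗ₘ t.η.app y
  unit_counit : t.η.app (𝟙_ C) ≫ op.e = 𝟙 (𝟙_ C)

/-- A comodule functor structure on `G : M ⥤ N` over an opmonoidal functor `(F, OF)`. -/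
structure ComodStr {C : Type u₁} [Category.{v₁} C] [MonoidalCategory C]
    {D : Type u₂} [Category.{v₂} D] [MonoidalCategory D]
    {M : Type u₁} [Category.{v₁} M] {N : Type u₂} [Category.{v₂} N]
    (F : C ⥤ D) (OF : OpmonStr F)
    (ρM : RAct C M) (ρN : RAct D N) (G : M ⥤ N) where
  δ : ∀ (m : M) (x : C), G.obj (ρM.smul m x) ⟶ ρN.smul (G.obj m) (F.obj x)
  natural : ∀ {m m' : M} {x x' : C} (f : m ⟶ m') (g : x ⟶ x'),
    G.map (ρM.smulHom f g) ≫ δ m' x' = δ m x ≫ ρN.smulHom (G.map f) (F.map g)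
  coassoc : ∀ (m : M) (x y : C),
    δ m (x ⊗ y) ≫ ρN.smulHom (𝟙 (G.obj m)) (OF.d x y) ≫
        eqToHom (ρN.assoc (G.obj m) (F.obj x) (F.obj y)) =
      G.map (eqToHom (ρM.assoc m x y)) ≫ δ (ρM.smul m x) y ≫
        ρN.smulHom (δ m x) (𝟙 (F.obj y))
  counital : ∀ m : M,
    δ m (𝟙_ C) ≫ ρN.smulHom (𝟙 (G.obj m)) OF.e ≫ eqToHom (ρN.unit (G.obj m)) =
      G.map (eqToHom (ρM.unit m))

/-- A coaction of a bimonad `(t, bs)` on a monad `K`, making `K` a comodule monad. -/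
structure Coaction {C : Type u₁} [Category.{v₁} C] [MonoidalCategory C]
    {M : Type u₁} [Category.{v₁} M]
    (t : Monad C) (bs : BimonadStr t) (ρ : RAct C M) (K : Monad M) where
  δ : ∀ (m : M) (x : C), K.obj (ρ.smul m x) ⟶ ρ.smul (K.obj m) (t.obj x)
  natural : ∀ {m m' : M} {x x' : C} (f : m ⟶ m') (g : x ⟶ x'),
    K.map (ρ.smulHom f g) ≫ δ m' x' = δ m x ≫ ρ.smulHom (K.map f) (t.map g)
  coassoc : ∀ (m : M) (x y : C),
    δ m (x ⊗ y) ≫ ρ.smulHom (𝟙 (K.obj m)) (bs.op.d x y) ≫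
        eqToHom (ρ.assoc (K.obj m) (t.obj x) (t.obj y)) =
      K.map (eqToHom (ρ.assoc m x y)) ≫ δ (ρ.smul m x) y ≫
        ρ.smulHom (δ m x) (𝟙 (t.obj y))
  counital : ∀ m : M,
    δ m (𝟙_ C) ≫ ρ.smulHom (𝟙 (K.obj m)) bs.op.e ≫ eqToHom (ρ.unit (K.obj m)) =
      K.map (eqToHom (ρ.unit m))
  mul_comod : ∀ (m : M) (x : C),
    K.μ.app (ρ.smul m x) ≫ δ m x =
      K.map (δ m x) ≫ δ (K.obj m) (t.obj x) ≫ ρ.smulHom (K.μ.app m) (t.μ.app x)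
  unit_comod : ∀ (m : M) (x : C),
    K.η.app (ρ.smul m x) ≫ δ m x = ρ.smulHom (K.η.app m) (t.η.app x)

/-!
The unit and multiplication of `K` are morphisms of comodule functors (`unit_comod`,
`mul_comod`), so the algebra laws of `θ_m` and `θ_x` transport along `δ` to those of
`(θ_m ◁ θ_x) ∘ δ_{m,x}`; naturality of `δ` makes `f ◁ g` a morphism of algebras whenever `f` and
`g` are, and functoriality is inherited from `◁`.
-/

namespace Coaction

variable {C : Type u₁} [Category.{v₁} C] [MonoidalCategory C] {M : Type u₁} [Category.{v₁} M]
  {t : Monad C} {bs : BimonadStr t} {ρ : RAct C M} {K : Monad M} (co : Coaction t bs ρ K)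

def algebraSmul (p : K.Algebra) (q : t.Algebra) : K.Algebra where
  A := ρ.smul p.A q.A
  a := co.δ p.A q.A ≫ ρ.smulHom p.a q.a
  unit := by
    rw [reassoc_of% (co.unit_comod p.A q.A), ← ρ.smulHom_comp, p.unit, q.unit, ρ.smulHom_id]
  assoc := by
    rw [reassoc_of% (co.mul_comod p.A q.A), Functor.map_comp, assoc, ← ρ.smulHom_comp, p.assoc,
      q.assoc, ρ.smulHom_comp, ← reassoc_of% (co.natural p.a q.a)]

theorem map_smulHom_comp_δ_comp_smulHom {p p' : K.Algebra} {q q' : t.Algebra} (f : p ⟶ p')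
    (g : q ⟶ q') :
    K.map (ρ.smulHom f.f g.f) ≫ co.δ p'.A q'.A ≫ ρ.smulHom p'.a q'.a =
      (co.δ p.A q.A ≫ ρ.smulHom p.a q.a) ≫ ρ.smulHom f.f g.f := by
  rw [reassoc_of% (co.natural f.f g.f), ← ρ.smulHom_comp, f.h, g.h, ρ.smulHom_comp, assoc]

def algebraSmulHom {p p' : K.Algebra} {q q' : t.Algebra} (f : p ⟶ p') (g : q ⟶ q') :
    co.algebraSmul p q ⟶ co.algebraSmul p' q' where
  f := ρ.smulHom f.f g.f
  h := co.map_smulHom_comp_δ_comp_smulHom f g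

def algebraSmulFunctor : K.Algebra × t.Algebra ⥤ K.Algebra where
  obj pq := co.algebraSmul pq.1 pq.2
  map fg := co.algebraSmulHom fg.1 fg.2
  map_id pq := Monad.Algebra.Hom.ext (ρ.smulHom_id pq.1.A pq.2.A)
  map_comp fg fg' := Monad.Algebra.Hom.ext (ρ.smulHom_comp fg.1.f fg'.1.f fg.2.f fg'.2.f)

end Coaction

/-- Let `(t, bs)` be a bimonad on `C` acting on a right `C`-module category `M`, and
`(K, co)` a comodule monad on `M` over it.  Then `M^K` is a right module category over
`C^t`, the action of a `B`-algebra `(x, θ_x)` on a `K`-algebra `(m, θ_m)` being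
`(m ◁ x, (θ_m ◁ θ_x) ∘ δ_{m,x})`, and the forgetful functor `U^K` is a strict comodule
functor over the strict monoidal forgetful functor `U^B`. -/
theorem stmt10 {C : Type u₁} [Category.{v₁} C] [MonoidalCategory C]
    {M : Type u₁} [Category.{v₁} M]
    (t : Monad C) (bs : BimonadStr t) (ρ : RAct C M) (K : Monad M)
    (co : Coaction t bs ρ K) :
    ∃ (act : K.Algebra → t.Algebra → K.Algebra)
      (actHom : ∀ {p p' : K.Algebra} {q q' : t.Algebra},
        (p ⟶ p') → (q ⟶ q') → (act p q ⟶ act p' q')),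
      (∀ (p : K.Algebra) (q : t.Algebra), (act p q).A = ρ.smul p.A q.A) ∧
      (∀ (p : K.Algebra) (q : t.Algebra),
        HEq (act p q).a (co.δ p.A q.A ≫ ρ.smulHom p.a q.a)) ∧
      (∀ {p p' : K.Algebra} {q q' : t.Algebra} (f : p ⟶ p') (g : q ⟶ q'),
        HEq (actHom f g).f (ρ.smulHom f.f g.f)) ∧
      (∀ (p : K.Algebra) (q : t.Algebra), actHom (𝟙 p) (𝟙 q) = 𝟙 (act p q)) ∧
      (∀ {p p' p'' : K.Algebra} {q q' q'' : t.Algebra}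
        (f : p ⟶ p') (f' : p' ⟶ p'') (g : q ⟶ q') (g' : q' ⟶ q''),
        actHom (f ≫ f') (g ≫ g') = actHom f g ≫ actHom f' g') := by
  let F := co.algebraSmulFunctor
  exact ⟨fun p q => F.obj (p, q), fun f g => F.map (f, g), fun _ _ => rfl, fun _ _ => HEq.rfl,
    fun _ _ => HEq.rfl, fun p q => F.map_id (p, q),
    fun f f' g g' => F.map_comp (X := (_, _)) (Y := (_, _)) (Z := (_, _)) (f, g) (f', g')⟩
end

section
/- Let F ⊣ U be a monoidal adjunction between monoidal categories C and D, with C-module category M and D-module category N, and let (G, δ^(G)) ⊣ (V, δ^(V)) be a comodule adjunction over it. Then the coaction δ^(V) of V is a natural isomorphism, with inverse at (n, y) given by the composite Vn ◁ Uy → VG(Vn ◁ Uy) → V(GVn ◀ FUy) → V(n ◀ y), where the arrows are the adjunction unit, V applied to δ^(G), and V applied to (ε^(G⊣V) ◀ ε^(F⊣U)). -/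
open CategoryTheory Category MonoidalCategory

universe v₁ v₂ u₁ u₂

section ComoduleAdjunctions

variable {C : Type u₁} [Category.{v₁} C] [MonoidalCategory C]
  {D : Type u₂} [Category.{v₂} D] [MonoidalCategory D]
  {M : Type u₁} [Category.{v₁} M] {N : Type u₂} [Category.{v₂} N]

/-- A lift of an adjunction `G ⊣ V` to a comodule adjunction over a (monoidal)
adjunction `F ⊣ U`: comodule structures on `G` over `F` and on `V` over `U`, whose unit
and counit satisfy the comodule compatibility squares. -/
structure ComodAdjLift (F : C ⥤ D) (U : D ⥤ C) (OF : OpmonStr F) (OU : OpmonStr U)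
    (adj : F ⊣ U) (ρM : RAct C M) (ρN : RAct D N)
    (G : M ⥤ N) (V : N ⥤ M) (adjGV : G ⊣ V) where
  cG : ComodStr F OF ρM ρN G
  cV : ComodStr U OU ρN ρM V
  unit_compat : ∀ (m : M) (x : C),
    adjGV.unit.app (ρM.smul m x) ≫ V.map (cG.δ m x) ≫ cV.δ (G.obj m) (F.obj x) =
      ρM.smulHom (adjGV.unit.app m) (adj.unit.app x)
  counit_compat : ∀ (n : N) (y : D),
    G.map (cV.δ n y) ≫ cG.δ (V.obj n) (U.obj y) ≫
        ρN.smulHom (adjGV.counit.app n) (adj.counit.app y) =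
      adjGV.counit.app (ρN.smul n y)

namespace ComodAdjLift

variable {F : C ⥤ D} {U : D ⥤ C} {OF : OpmonStr F} {OU : OpmonStr U} {adj : F ⊣ U}
  {ρM : RAct C M} {ρN : RAct D N} {G : M ⥤ N} {V : N ⥤ M} {adjGV : G ⊣ V}
  (L : ComodAdjLift F U OF OU adj ρM ρN G V adjGV)

def coactionInv (n : N) (y : D) : ρM.smul (V.obj n) (U.obj y) ⟶ V.obj (ρN.smul n y) :=
  adjGV.unit.app (ρM.smul (V.obj n) (U.obj y)) ≫ V.map (L.cG.δ (V.obj n) (U.obj y)) ≫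
    V.map (ρN.smulHom (adjGV.counit.app n) (adj.counit.app y))

/-- Naturality of the unit moves `δ^V` under `VG`, where the counit square collapses
`G δ^V ≫ δ^G ≫ (ε ◀ ε)` to `ε`; the triangle identity finishes. -/
theorem coaction_hom_inv_id (n : N) (y : D) :
    L.cV.δ n y ≫ L.coactionInv n y = 𝟙 (V.obj (ρN.smul n y)) := by
  have unit_natural := adjGV.unit.naturality (L.cV.δ n y)
  simp only [Functor.id_map, Functor.comp_map] at unit_natural
  rw [coactionInv, ← assoc, unit_natural, assoc, ← V.map_comp_assoc, ← V.map_comp, assoc,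
    L.counit_compat]
  exact adjGV.right_triangle_components (ρN.smul n y)

/-- Naturality of `δ^V` moves `ε ◀ ε` past it, the unit square turns the rest into
`η ◁ η`, and the two triangle identities finish. -/
theorem coaction_inv_hom_id (n : N) (y : D) :
    L.coactionInv n y ≫ L.cV.δ n y = 𝟙 (ρM.smul (V.obj n) (U.obj y)) := by
  have coaction_natural := L.cV.natural (adjGV.counit.app n) (adj.counit.app y)
  simp only [Functor.id_obj, Functor.comp_obj] at coaction_natural
  rw [coactionInv, assoc, assoc, coaction_natural, ← assoc, ← assoc,
    assoc (adjGV.unit.app _), L.unit_compat, ← ρM.smulHom_comp,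
    adjGV.right_triangle_components, adj.right_triangle_components]
  exact ρM.smulHom_id _ _

end ComodAdjLift

theorem stmt11_general (F : C ⥤ D) (U : D ⥤ C) (OF : OpmonStr F) (OU : OpmonStr U)
    (adj : F ⊣ U)
    (ρM : RAct C M) (ρN : RAct D N)
    (G : M ⥤ N) (V : N ⥤ M) (adjGV : G ⊣ V)
    (L : ComodAdjLift F U OF OU adj ρM ρN G V adjGV) :
    ∀ (n : N) (y : D),
      (L.cV.δ n y ≫
        adjGV.unit.app (ρM.smul (V.obj n) (U.obj y)) ≫
          V.map (L.cG.δ (V.obj n) (U.obj y)) ≫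
            V.map (ρN.smulHom (adjGV.counit.app n) (adj.counit.app y)) =
        𝟙 (V.obj (ρN.smul n y))) ∧
      ((adjGV.unit.app (ρM.smul (V.obj n) (U.obj y)) ≫
          V.map (L.cG.δ (V.obj n) (U.obj y)) ≫
            V.map (ρN.smulHom (adjGV.counit.app n) (adj.counit.app y))) ≫
        L.cV.δ n y = 𝟙 (ρM.smul (V.obj n) (U.obj y))) :=
  fun n y => ⟨L.coaction_hom_inv_id n y, L.coaction_inv_hom_id n y⟩

/-- In a comodule adjunction `(G, δ^G) ⊣ (V, δ^V)` over a monoidal adjunction `F ⊣ U`,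
the coaction `δ^V` is invertible, with inverse at `(n, y)` the composite of the
adjunction unit, `V δ^G`, and `V (ε^{G⊣V} ◀ ε^{F⊣U})`. -/
theorem stmt11 (F : C ⥤ D) (U : D ⥤ C) (OF : OpmonStr F) (OU : OpmonStr U)
    (adj : F ⊣ U)
    (hd : ∀ x y : D, IsIso (OU.d x y)) (he : IsIso OU.e)
    (hu : ∀ x y : C, adj.unit.app (x ⊗ y) ≫ U.map (OF.d x y) ≫ OU.d (F.obj x) (F.obj y)
      = adj.unit.app x ⊗ₘ adj.unit.app y)
    (hu0 : adj.unit.app (𝟙_ C) ≫ U.map OF.e ≫ OU.e = 𝟙 (𝟙_ C))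
    (hc : ∀ x y : D, F.map (OU.d x y) ≫ OF.d (U.obj x) (U.obj y) ≫
      (adj.counit.app x ⊗ₘ adj.counit.app y) = adj.counit.app (x ⊗ y))
    (hc0 : F.map OU.e ≫ OF.e = adj.counit.app (𝟙_ D))
    (ρM : RAct C M) (ρN : RAct D N)
    (G : M ⥤ N) (V : N ⥤ M) (adjGV : G ⊣ V)
    (L : ComodAdjLift F U OF OU adj ρM ρN G V adjGV) :
    ∀ (n : N) (y : D),
      (L.cV.δ n y ≫
        adjGV.unit.app (ρM.smul (V.obj n) (U.obj y)) ≫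
          V.map (L.cG.δ (V.obj n) (U.obj y)) ≫
            V.map (ρN.smulHom (adjGV.counit.app n) (adj.counit.app y)) =
        𝟙 (V.obj (ρN.smul n y))) ∧
      ((adjGV.unit.app (ρM.smul (V.obj n) (U.obj y)) ≫
          V.map (L.cG.δ (V.obj n) (U.obj y)) ≫
            V.map (ρN.smulHom (adjGV.counit.app n) (adj.counit.app y))) ≫
        L.cV.δ n y = 𝟙 (ρM.smul (V.obj n) (U.obj y))) :=
  stmt11_general F U OF OU adj ρM ρN G V adjGV L
end ComoduleAdjunctions
end

section
/- Let F ⊣ U be a monoidal adjunction between monoidal categories C and D, M a right C-module and N a right D-module category, and G ⊣ V any adjunction with G : M → N. Then lifts of G ⊣ V to a comodule adjunction over F ⊣ U are in bijection with strong comodule functor structures on V over U. -/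
open CategoryTheory Category MonoidalCategory

universe v₁ v₂ u₁ u₂

section ComoduleAdjunctions

variable {C : Type u₁} [Category.{v₁} C] [MonoidalCategory C]
  {D : Type u₂} [Category.{v₂} D] [MonoidalCategory D]
  {M : Type u₁} [Category.{v₁} M] {N : Type u₂} [Category.{v₂} N]

/-- A strong comodule functor structure on `V` over `U`. -/
structure StrongComod (U : D ⥤ C) (OU : OpmonStr U) (ρN : RAct D N) (ρM : RAct C M)
    (V : N ⥤ M) extends ComodStr U OU ρN ρM V where
  iso : ∀ (n : N) (y : D), IsIso (toComodStr.δ n y)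

/-!
Transposing along `G ⊣ V`, a coaction `δᴳ` on `G` satisfying the unit square is the same as a
solution of `η ≫ V δᴳ ≫ δⱽ = η ◁ η`. When `δⱽ` is invertible this has exactly one solution, the
mate of `(δⱽ)⁻¹`; its coassociativity and counitality follow from those of `δⱽ` because the unit
of `F ⊣ U` is opmonoidal, and the counit square follows from the triangle identities. Conversely,
the two squares of a comodule adjunction exhibit an explicit inverse of `δⱽ`.
-/

theorem RAct.isIso_smulHom {A : Type*} [Category A] [MonoidalCategory A] {X : Type*}
    [Category X] (ρ : RAct A X) {m m' : X} {x x' : A} (f : m ⟶ m') (g : x ⟶ x') [IsIso f]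
    [IsIso g] : IsIso (ρ.smulHom f g) :=
  ⟨ρ.smulHom (inv f) (inv g),
    by rw [← ρ.smulHom_comp, IsIso.hom_inv_id, IsIso.hom_inv_id, ρ.smulHom_id],
    by rw [← ρ.smulHom_comp, IsIso.inv_hom_id, IsIso.inv_hom_id, ρ.smulHom_id]⟩

theorem RAct.smulHom_comp_assoc {A : Type*} [Category A] [MonoidalCategory A] {X : Type*}
    [Category X] (ρ : RAct A X) {m m' m'' : X} {x x' x'' : A} (f : m ⟶ m') (f' : m' ⟶ m'')
    (g : x ⟶ x') (g' : x' ⟶ x'') {Z : X} (k : ρ.smul m'' x'' ⟶ Z) :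
    ρ.smulHom f g ≫ ρ.smulHom f' g' ≫ k = ρ.smulHom (f ≫ f') (g ≫ g') ≫ k := by
  rw [ρ.smulHom_comp, Category.assoc]

theorem CategoryTheory.Adjunction.eq_of_unit_comp_map_eq {A B : Type*} [Category A] [Category B]
    {L : A ⥤ B} {R : B ⥤ A} (adj : L ⊣ R) {a : A} {b : B} {f g : L.obj a ⟶ b}
    (h : adj.unit.app a ≫ R.map f = adj.unit.app a ≫ R.map g) : f = g :=
  (adj.homEquiv a b).injective (by simpa only [Adjunction.homEquiv_unit] using h)

theorem ComodStr.ext_δ {F : C ⥤ D} {OF : OpmonStr F} {ρM : RAct C M} {ρN : RAct D N}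
    {G : M ⥤ N} {a b : ComodStr F OF ρM ρN G} (h : ∀ m x, a.δ m x = b.δ m x) : a = b := by
  obtain ⟨δa, _, _, _⟩ := a
  obtain ⟨δb, _, _, _⟩ := b
  obtain rfl : δa = δb := funext fun m => funext fun x => h m x
  rfl

namespace StrongComod

variable {F : C ⥤ D} {U : D ⥤ C} {OF : OpmonStr F} {OU : OpmonStr U}
  {ρM : RAct C M} {ρN : RAct D N} {G : M ⥤ N} {V : N ⥤ M}
  (S : StrongComod U OU ρN ρM V) (adj : F ⊣ U) (adjGV : G ⊣ V)

instance isIso_δ (n : N) (y : D) : IsIso (S.δ n y) := S.iso n y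

noncomputable def leftAdjointδ (m : M) (x : C) :
    G.obj (ρM.smul m x) ⟶ ρN.smul (G.obj m) (F.obj x) :=
  (adjGV.homEquiv _ _).symm
    (ρM.smulHom (adjGV.unit.app m) (adj.unit.app x) ≫ inv (S.δ (G.obj m) (F.obj x)))

theorem unit_compat_leftAdjointδ (m : M) (x : C) :
    adjGV.unit.app (ρM.smul m x) ≫ V.map (S.leftAdjointδ adj adjGV m x) ≫
        S.δ (G.obj m) (F.obj x) =
      ρM.smulHom (adjGV.unit.app m) (adj.unit.app x) := by
  have transpose := (adjGV.homEquiv _ _).apply_symm_apply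
    (ρM.smulHom (adjGV.unit.app m) (adj.unit.app x) ≫ inv (S.δ (G.obj m) (F.obj x)))
  simp only [Adjunction.homEquiv_unit, Functor.id_obj] at transpose
  rw [← Category.assoc, leftAdjointδ, transpose, Category.assoc, IsIso.inv_hom_id,
    Category.comp_id]

theorem eq_leftAdjointδ {m : M} {x : C} (f : G.obj (ρM.smul m x) ⟶ ρN.smul (G.obj m) (F.obj x))
    (hf : adjGV.unit.app (ρM.smul m x) ≫ V.map f ≫ S.δ (G.obj m) (F.obj x) =
      ρM.smulHom (adjGV.unit.app m) (adj.unit.app x)) :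
    f = S.leftAdjointδ adj adjGV m x := by
  apply adjGV.eq_of_unit_comp_map_eq
  rw [← cancel_mono (S.δ (G.obj m) (F.obj x)), Category.assoc, Category.assoc, hf,
    unit_compat_leftAdjointδ]

theorem leftAdjointδ_natural {m m' : M} {x x' : C} (f : m ⟶ m') (g : x ⟶ x') :
    G.map (ρM.smulHom f g) ≫ S.leftAdjointδ adj adjGV m' x' =
      S.leftAdjointδ adj adjGV m x ≫ ρN.smulHom (G.map f) (F.map g) := by
  apply adjGV.eq_of_unit_comp_map_eq
  rw [← cancel_mono (S.δ (G.obj m') (F.obj x'))]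
  simp only [Functor.map_comp, Category.assoc]
  rw [reassoc_of% (adjGV.unit_naturality (ρM.smulHom f g)), unit_compat_leftAdjointδ,
    S.natural (G.map f) (F.map g),
    reassoc_of% (S.unit_compat_leftAdjointδ adj adjGV m x), ← ρM.smulHom_comp,
    ← ρM.smulHom_comp, ← adjGV.unit_naturality f, ← adj.unit_naturality g]

theorem leftAdjointδ_counital
    (hu0 : adj.unit.app (𝟙_ C) ≫ U.map OF.e ≫ OU.e = 𝟙 (𝟙_ C)) (m : M) :
    S.leftAdjointδ adj adjGV m (𝟙_ C) ≫ ρN.smulHom (𝟙 (G.obj m)) OF.e ≫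
        eqToHom (ρN.unit (G.obj m)) =
      G.map (eqToHom (ρM.unit m)) := by
  apply adjGV.eq_of_unit_comp_map_eq
  simp only [Functor.map_comp]
  rw [adjGV.unit_naturality (eqToHom (ρM.unit m)), ← S.counital (G.obj m),
    reassoc_of% (S.natural (𝟙 (G.obj m)) OF.e), V.map_id,
    reassoc_of% (S.unit_compat_leftAdjointδ adj adjGV m (𝟙_ C)),
    ρM.smulHom_comp_assoc, ρM.smulHom_comp_assoc]
  simp only [Category.comp_id, Category.assoc]
  rw [hu0, ρM.unit_hom]
  simp

theorem leftAdjointδ_coassoc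
    (hu : ∀ x y : C, adj.unit.app (x ⊗ y) ≫ U.map (OF.d x y) ≫ OU.d (F.obj x) (F.obj y)
      = adj.unit.app x ⊗ₘ adj.unit.app y) (m : M) (x y : C) :
    S.leftAdjointδ adj adjGV m (x ⊗ y) ≫ ρN.smulHom (𝟙 (G.obj m)) (OF.d x y) ≫
        eqToHom (ρN.assoc (G.obj m) (F.obj x) (F.obj y)) =
      G.map (eqToHom (ρM.assoc m x y)) ≫ S.leftAdjointδ adj adjGV (ρM.smul m x) y ≫
        ρN.smulHom (S.leftAdjointδ adj adjGV m x) (𝟙 (F.obj y)) := by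
  have : IsIso (ρM.smulHom (S.δ (G.obj m) (F.obj x)) (𝟙 (U.obj (F.obj y)))) :=
    ρM.isIso_smulHom _ _
  apply adjGV.eq_of_unit_comp_map_eq
  rw [← cancel_mono (S.δ (ρN.smul (G.obj m) (F.obj x)) (F.obj y) ≫
    ρM.smulHom (S.δ (G.obj m) (F.obj x)) (𝟙 (U.obj (F.obj y))))]
  simp only [Functor.map_comp, Category.assoc]
  -- the left side reduces to `η ◁ (η_{x ⊗ y} ≫ U(d) ≫ d)`, the right side to `(η ◁ η) ◁ η`
  rw [← S.coassoc (G.obj m) (F.obj x) (F.obj y),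
    reassoc_of% (S.natural (𝟙 (G.obj m)) (OF.d x y)), V.map_id,
    reassoc_of% (S.unit_compat_leftAdjointδ adj adjGV m (x ⊗ y)),
    ρM.smulHom_comp_assoc, ρM.smulHom_comp_assoc]
  simp only [Category.comp_id, Category.assoc]
  rw [hu, ρM.assoc_hom, reassoc_of% (adjGV.unit_naturality (eqToHom (ρM.assoc m x y))),
    reassoc_of% (S.natural (S.leftAdjointδ adj adjGV m x) (𝟙 (F.obj y))), U.map_id,
    reassoc_of% (S.unit_compat_leftAdjointδ adj adjGV (ρM.smul m x) y),
    ρM.smulHom_comp_assoc, ← ρM.smulHom_comp]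
  simp only [Category.comp_id, Category.assoc]
  rw [unit_compat_leftAdjointδ]
  simp

theorem counit_compat_leftAdjointδ (n : N) (y : D) :
    G.map (S.δ n y) ≫ S.leftAdjointδ adj adjGV (V.obj n) (U.obj y) ≫
        ρN.smulHom (adjGV.counit.app n) (adj.counit.app y) =
      adjGV.counit.app (ρN.smul n y) := by
  apply adjGV.eq_of_unit_comp_map_eq
  rw [← cancel_mono (S.δ n y)]
  simp only [Functor.map_comp, Category.assoc, Functor.id_obj, Functor.comp_obj]
  have hnat := S.natural (adjGV.counit.app n) (adj.counit.app y)
  simp only [Functor.id_obj, Functor.comp_obj] at hnat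
  rw [reassoc_of% (adjGV.unit_naturality (S.δ n y)), hnat,
    reassoc_of% (S.unit_compat_leftAdjointδ adj adjGV (V.obj n) (U.obj y)),
    ← ρM.smulHom_comp, adjGV.right_triangle_components, adj.right_triangle_components,
    ρM.smulHom_id, Category.comp_id]
  simp

noncomputable def toComodAdjLift
    (hu : ∀ x y : C, adj.unit.app (x ⊗ y) ≫ U.map (OF.d x y) ≫ OU.d (F.obj x) (F.obj y)
      = adj.unit.app x ⊗ₘ adj.unit.app y)
    (hu0 : adj.unit.app (𝟙_ C) ≫ U.map OF.e ≫ OU.e = 𝟙 (𝟙_ C)) :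
    ComodAdjLift F U OF OU adj ρM ρN G V adjGV where
  cG :=
    { δ := S.leftAdjointδ adj adjGV
      natural := S.leftAdjointδ_natural adj adjGV
      coassoc := S.leftAdjointδ_coassoc adj adjGV hu
      counital := S.leftAdjointδ_counital adj adjGV hu0 }
  cV := S.toComodStr
  unit_compat := S.unit_compat_leftAdjointδ adj adjGV
  counit_compat := S.counit_compat_leftAdjointδ adj adjGV

end StrongComod

namespace ComodAdjLift

variable {F : C ⥤ D} {U : D ⥤ C} {OF : OpmonStr F} {OU : OpmonStr U} {adj : F ⊣ U}
  {ρM : RAct C M} {ρN : RAct D N} {G : M ⥤ N} {V : N ⥤ M} {adjGV : G ⊣ V}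
  (L : ComodAdjLift F U OF OU adj ρM ρN G V adjGV)

theorem isIso_cV_δ (n : N) (y : D) : IsIso (L.cV.δ n y) := by
  let δinv := adjGV.unit.app (ρM.smul (V.obj n) (U.obj y)) ≫
    V.map (L.cG.δ (V.obj n) (U.obj y) ≫ ρN.smulHom (adjGV.counit.app n) (adj.counit.app y))
  have hom_inv : L.cV.δ n y ≫ δinv = 𝟙 _ := by
    rw [← reassoc_of% (adjGV.unit_naturality (L.cV.δ n y)), ← V.map_comp, L.counit_compat n y,
      adjGV.right_triangle_components]
  have inv_hom : δinv ≫ L.cV.δ n y = 𝟙 _ := by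
    have hnat := L.cV.natural (adjGV.counit.app n) (adj.counit.app y)
    simp only [Functor.id_obj, Functor.comp_obj] at hnat
    simp only [δinv, Functor.map_comp, Category.assoc, Functor.id_obj, Functor.comp_obj]
    rw [hnat, reassoc_of% (L.unit_compat (V.obj n) (U.obj y)), ← ρM.smulHom_comp,
      adjGV.right_triangle_components, adj.right_triangle_components, ρM.smulHom_id]
  exact ⟨δinv, hom_inv, inv_hom⟩

def toStrongComod : StrongComod U OU ρN ρM V where
  toComodStr := L.cV
  iso := L.isIso_cV_δ

theorem ext_of_cV_eq {L L' : ComodAdjLift F U OF OU adj ρM ρN G V adjGV} (h : L.cV = L'.cV) :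
    L = L' := by
  have hcG : L.cG = L'.cG := ComodStr.ext_δ fun m x =>
    (L.toStrongComod.eq_leftAdjointδ adj adjGV _ (L.unit_compat m x)).trans
      (L.toStrongComod.eq_leftAdjointδ adj adjGV _
        (by simpa only [toStrongComod, h] using L'.unit_compat m x)).symm
  cases L; cases L'; cases h; cases hcG; rfl

end ComodAdjLift

noncomputable def comodAdjLiftEquivStrongComod {F : C ⥤ D} {U : D ⥤ C} {OF : OpmonStr F}
    {OU : OpmonStr U} (adj : F ⊣ U)
    (hu : ∀ x y : C, adj.unit.app (x ⊗ y) ≫ U.map (OF.d x y) ≫ OU.d (F.obj x) (F.obj y)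
      = adj.unit.app x ⊗ₘ adj.unit.app y)
    (hu0 : adj.unit.app (𝟙_ C) ≫ U.map OF.e ≫ OU.e = 𝟙 (𝟙_ C))
    (ρM : RAct C M) (ρN : RAct D N) {G : M ⥤ N} {V : N ⥤ M} (adjGV : G ⊣ V) :
    ComodAdjLift F U OF OU adj ρM ρN G V adjGV ≃ StrongComod U OU ρN ρM V where
  toFun L := L.toStrongComod
  invFun S := S.toComodAdjLift adj adjGV hu hu0
  left_inv _ := ComodAdjLift.ext_of_cV_eq rfl
  right_inv _ := rfl

theorem stmt12_general (F : C ⥤ D) (U : D ⥤ C) (OF : OpmonStr F) (OU : OpmonStr U)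
    (adj : F ⊣ U)
    (hu : ∀ x y : C, adj.unit.app (x ⊗ y) ≫ U.map (OF.d x y) ≫ OU.d (F.obj x) (F.obj y)
      = adj.unit.app x ⊗ₘ adj.unit.app y)
    (hu0 : adj.unit.app (𝟙_ C) ≫ U.map OF.e ≫ OU.e = 𝟙 (𝟙_ C))
    (ρM : RAct C M) (ρN : RAct D N)
    (G : M ⥤ N) (V : N ⥤ M) (adjGV : G ⊣ V) :
    ∃ e : ComodAdjLift F U OF OU adj ρM ρN G V adjGV ≃
        StrongComod U OU ρN ρM V,
      ∀ (L : ComodAdjLift F U OF OU adj ρM ρN G V adjGV) (n : N) (y : D),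
        (e L).toComodStr.δ n y = L.cV.δ n y :=
  ⟨comodAdjLiftEquivStrongComod adj hu hu0 ρM ρN adjGV, fun _ _ _ => rfl⟩

/-- Let `F ⊣ U` be a monoidal adjunction, `M` a right `C`-module, `N` a right `D`-module,
and `G ⊣ V` any adjunction with `G : M ⥤ N`.  Lifts of `G ⊣ V` to a comodule adjunction
over `F ⊣ U` are in bijection with strong comodule functor structures on `V` over `U`,
the bijection preserving the coaction of `V`. -/
theorem stmt12 (F : C ⥤ D) (U : D ⥤ C) (OF : OpmonStr F) (OU : OpmonStr U)
    (adj : F ⊣ U)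
    (hd : ∀ x y : D, IsIso (OU.d x y)) (he : IsIso OU.e)
    (hu : ∀ x y : C, adj.unit.app (x ⊗ y) ≫ U.map (OF.d x y) ≫ OU.d (F.obj x) (F.obj y)
      = adj.unit.app x ⊗ₘ adj.unit.app y)
    (hu0 : adj.unit.app (𝟙_ C) ≫ U.map OF.e ≫ OU.e = 𝟙 (𝟙_ C))
    (hc : ∀ x y : D, F.map (OU.d x y) ≫ OF.d (U.obj x) (U.obj y) ≫
      (adj.counit.app x ⊗ₘ adj.counit.app y) = adj.counit.app (x ⊗ y))
    (hc0 : F.map OU.e ≫ OF.e = adj.counit.app (𝟙_ D))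
    (ρM : RAct C M) (ρN : RAct D N)
    (G : M ⥤ N) (V : N ⥤ M) (adjGV : G ⊣ V) :
    ∃ e : ComodAdjLift F U OF OU adj ρM ρN G V adjGV ≃
        StrongComod U OU ρN ρM V,
      ∀ (L : ComodAdjLift F U OF OU adj ρM ρN G V adjGV) (n : N) (y : D),
        (e L).toComodStr.δ n y = L.cV.δ n y :=
  stmt12_general F U OF OU adj hu hu0 ρM ρN G V adjGV
end ComoduleAdjunctions
end

section
/- Given a strong monoidal adjunction F ⊣ U and a strong comodule functor structure δ^(V) on V over U, the natural transformation δ^(G) : G(m ◁ x) → Gm ◀ Fx defined by G(η^{G⊣V}_m ◁ η^{F⊣U}_x), then G applied to the inverse of δ^(V) at (Gm, Fx), then the counit ε^{G⊣V}_{Gm ◀ Fx}, is a coassociative and counital coaction making G a comodule functor over F. -/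
open CategoryTheory Category MonoidalCategory

universe v₁ v₂ u₁ u₂

/-!
Every identity is checked after transposing along `G ⊣ V`. The transpose of `δ^G_{m,x}` is
`(δ^V)⁻¹ ∘ (η_m ◁ η_x)`, so each comodule axiom for `δ^G` turns into the corresponding axiom for
`(δ^V)⁻¹` (obtained from that of `δ^V` by inverting) combined with the monoidality of the unit of
`F ⊣ U`, which is what matches `OF` with `OU`.
-/

namespace RAct

variable {C : Type u₁} [Category.{v₁} C] [MonoidalCategory C] {M : Type u₂} [Category.{v₂} M]
  (ρ : RAct C M)

@[simp]
theorem smulHom_comp_smulHom {m m' m'' : M} {x x' x'' : C} (f : m ⟶ m') (f' : m' ⟶ m'')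
    (g : x ⟶ x') (g' : x' ⟶ x'') :
    ρ.smulHom f g ≫ ρ.smulHom f' g' = ρ.smulHom (f ≫ f') (g ≫ g') :=
  (ρ.smulHom_comp f f' g g').symm

@[simp]
theorem smulHom_comp_smulHom_assoc {m m' m'' : M} {x x' x'' : C} (f : m ⟶ m')
    (f' : m' ⟶ m'') (g : x ⟶ x') (g' : x' ⟶ x'') {z : M} (h : ρ.smul m'' x'' ⟶ z) :
    ρ.smulHom f g ≫ ρ.smulHom f' g' ≫ h = ρ.smulHom (f ≫ f') (g ≫ g') ≫ h := by
  rw [← Category.assoc, smulHom_comp_smulHom]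

end RAct

section ComoduleAdjunctions

variable {C : Type u₁} [Category.{v₁} C] [MonoidalCategory C]
  {D : Type u₂} [Category.{v₂} D] [MonoidalCategory D]
  {M : Type u₁} [Category.{v₁} M] {N : Type u₂} [Category.{v₂} N]

namespace ComodStr

variable {F : C ⥤ D} {OF : OpmonStr F} {ρM : RAct C M} {ρN : RAct D N} {G : M ⥤ N}
  (c : ComodStr F OF ρM ρN G)
  {δinv : ∀ (m : M) (x : C), ρN.smul (G.obj m) (F.obj x) ⟶ G.obj (ρM.smul m x)}

theorem inv_natural (h₁ : ∀ m x, c.δ m x ≫ δinv m x = 𝟙 _)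
    (h₂ : ∀ m x, δinv m x ≫ c.δ m x = 𝟙 _) {m m' : M} {x x' : C} (f : m ⟶ m') (g : x ⟶ x') :
    δinv m x ≫ G.map (ρM.smulHom f g) = ρN.smulHom (G.map f) (F.map g) ≫ δinv m' x' :=
  calc δinv m x ≫ G.map (ρM.smulHom f g)
      = δinv m x ≫ (G.map (ρM.smulHom f g) ≫ c.δ m' x') ≫ δinv m' x' := by
        rw [Category.assoc, h₁, Category.comp_id]
    _ = ρN.smulHom (G.map f) (F.map g) ≫ δinv m' x' := by
        rw [c.natural, ← Category.assoc, ← Category.assoc, h₂, Category.id_comp]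

theorem inv_counital (h₂ : ∀ m x, δinv m x ≫ c.δ m x = 𝟙 _) (m : M) :
    δinv m (𝟙_ C) ≫ G.map (eqToHom (ρM.unit m)) =
      ρN.smulHom (𝟙 (G.obj m)) OF.e ≫ eqToHom (ρN.unit (G.obj m)) := by
  rw [← c.counital, ← Category.assoc, h₂, Category.id_comp]

theorem inv_coassoc (h₁ : ∀ m x, c.δ m x ≫ δinv m x = 𝟙 _)
    (h₂ : ∀ m x, δinv m x ≫ c.δ m x = 𝟙 _) (m : M) (x y : C) :
    δinv m (x ⊗ y) ≫ G.map (eqToHom (ρM.assoc m x y)) =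
      ρN.smulHom (𝟙 (G.obj m)) (OF.d x y) ≫ eqToHom (ρN.assoc (G.obj m) (F.obj x) (F.obj y)) ≫
        ρN.smulHom (δinv m x) (𝟙 (F.obj y)) ≫ δinv (ρM.smul m x) y := by
  have h₁' : ρN.smulHom (c.δ m x) (𝟙 (F.obj y)) ≫ ρN.smulHom (δinv m x) (𝟙 (F.obj y)) = 𝟙 _ := by
    rw [RAct.smulHom_comp_smulHom, h₁, Category.comp_id, ρN.smulHom_id]
  calc δinv m (x ⊗ y) ≫ G.map (eqToHom (ρM.assoc m x y))
      = δinv m (x ⊗ y) ≫ (G.map (eqToHom (ρM.assoc m x y)) ≫ c.δ (ρM.smul m x) y ≫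
          ρN.smulHom (c.δ m x) (𝟙 (F.obj y))) ≫
            ρN.smulHom (δinv m x) (𝟙 (F.obj y)) ≫ δinv (ρM.smul m x) y := by
        simp only [Category.assoc, reassoc_of% h₁', h₁, Category.comp_id]
    _ = _ := by
        rw [← c.coassoc]
        simp only [Category.assoc]
        rw [reassoc_of% h₂]

end ComodStr

section LeftAdjoint

variable {F : C ⥤ D} {U : D ⥤ C} {OF : OpmonStr F} {OU : OpmonStr U} (adj : F ⊣ U)
  {ρM : RAct C M} {ρN : RAct D N} {G : M ⥤ N} {V : N ⥤ M} (adjGV : G ⊣ V)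
  (δVinv : ∀ (n : N) (y : D), ρM.smul (V.obj n) (U.obj y) ⟶ V.obj (ρN.smul n y))

def leftAdjointCoaction (m : M) (x : C) : G.obj (ρM.smul m x) ⟶ ρN.smul (G.obj m) (F.obj x) :=
  G.map (ρM.smulHom (adjGV.unit.app m) (adj.unit.app x)) ≫
    G.map (δVinv (G.obj m) (F.obj x)) ≫ adjGV.counit.app (ρN.smul (G.obj m) (F.obj x))

theorem unit_app_comp_map_leftAdjointCoaction (m : M) (x : C) :
    adjGV.unit.app (ρM.smul m x) ≫ V.map (leftAdjointCoaction adj adjGV δVinv m x) =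
      ρM.smulHom (adjGV.unit.app m) (adj.unit.app x) ≫ δVinv (G.obj m) (F.obj x) := by
  simp [leftAdjointCoaction]

theorem homEquiv_leftAdjointCoaction (m : M) (x : C) :
    adjGV.homEquiv _ _ (leftAdjointCoaction adj adjGV δVinv m x) =
      ρM.smulHom (adjGV.unit.app m) (adj.unit.app x) ≫ δVinv (G.obj m) (F.obj x) := by
  rw [Adjunction.homEquiv_unit, unit_app_comp_map_leftAdjointCoaction]

variable {δVinv}

theorem leftAdjointCoaction_natural
    (hnat : ∀ {n n' : N} {y y' : D} (f : n ⟶ n') (g : y ⟶ y'),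
      δVinv n y ≫ V.map (ρN.smulHom f g) = ρM.smulHom (V.map f) (U.map g) ≫ δVinv n' y')
    {m m' : M} {x x' : C} (f : m ⟶ m') (g : x ⟶ x') :
    G.map (ρM.smulHom f g) ≫ leftAdjointCoaction adj adjGV δVinv m' x' =
      leftAdjointCoaction adj adjGV δVinv m x ≫ ρN.smulHom (G.map f) (F.map g) := by
  apply (adjGV.homEquiv _ _).injective
  rw [Adjunction.homEquiv_naturality_left, Adjunction.homEquiv_naturality_right,
    homEquiv_leftAdjointCoaction, homEquiv_leftAdjointCoaction, Category.assoc, hnat]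
  simp

theorem leftAdjointCoaction_coassoc
    (hnat : ∀ {n n' : N} {y y' : D} (f : n ⟶ n') (g : y ⟶ y'),
      δVinv n y ≫ V.map (ρN.smulHom f g) = ρM.smulHom (V.map f) (U.map g) ≫ δVinv n' y')
    (hu : ∀ x y : C, adj.unit.app (x ⊗ y) ≫ U.map (OF.d x y) ≫ OU.d (F.obj x) (F.obj y)
      = adj.unit.app x ⊗ₘ adj.unit.app y)
    (hcoassoc : ∀ (n : N) (x y : D), δVinv n (x ⊗ y) ≫ V.map (eqToHom (ρN.assoc n x y)) =
      ρM.smulHom (𝟙 (V.obj n)) (OU.d x y) ≫ eqToHom (ρM.assoc (V.obj n) (U.obj x) (U.obj y)) ≫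
        ρM.smulHom (δVinv n x) (𝟙 (U.obj y)) ≫ δVinv (ρN.smul n x) y)
    (m : M) (x y : C) :
    leftAdjointCoaction adj adjGV δVinv m (x ⊗ y) ≫ ρN.smulHom (𝟙 (G.obj m)) (OF.d x y) ≫
        eqToHom (ρN.assoc (G.obj m) (F.obj x) (F.obj y)) =
      G.map (eqToHom (ρM.assoc m x y)) ≫ leftAdjointCoaction adj adjGV δVinv (ρM.smul m x) y ≫
        ρN.smulHom (leftAdjointCoaction adj adjGV δVinv m x) (𝟙 (F.obj y)) := by
  apply (adjGV.homEquiv _ _).injective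
  rw [Adjunction.homEquiv_naturality_left, Adjunction.homEquiv_naturality_right,
    Adjunction.homEquiv_naturality_right, homEquiv_leftAdjointCoaction,
    homEquiv_leftAdjointCoaction, Functor.map_comp, Category.assoc, reassoc_of% hnat,
    hcoassoc]
  simp only [Category.assoc]
  rw [hnat]
  simp only [RAct.smulHom_comp_smulHom_assoc]
  rw [unit_app_comp_map_leftAdjointCoaction, hu, ρM.assoc_hom]
  simp

theorem leftAdjointCoaction_counital
    (hnat : ∀ {n n' : N} {y y' : D} (f : n ⟶ n') (g : y ⟶ y'),
      δVinv n y ≫ V.map (ρN.smulHom f g) = ρM.smulHom (V.map f) (U.map g) ≫ δVinv n' y')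
    (hu0 : adj.unit.app (𝟙_ C) ≫ U.map OF.e ≫ OU.e = 𝟙 (𝟙_ C))
    (hcounital : ∀ n : N, δVinv n (𝟙_ D) ≫ V.map (eqToHom (ρN.unit n)) =
      ρM.smulHom (𝟙 (V.obj n)) OU.e ≫ eqToHom (ρM.unit (V.obj n)))
    (m : M) :
    leftAdjointCoaction adj adjGV δVinv m (𝟙_ C) ≫ ρN.smulHom (𝟙 (G.obj m)) OF.e ≫
        eqToHom (ρN.unit (G.obj m)) = G.map (eqToHom (ρM.unit m)) := by
  apply (adjGV.homEquiv _ _).injective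
  rw [Adjunction.homEquiv_naturality_right, homEquiv_leftAdjointCoaction,
    Adjunction.homEquiv_unit, Functor.map_comp, Category.assoc, reassoc_of% hnat, hcounital,
    RAct.smulHom_comp_smulHom_assoc]
  simp [hu0, ρM.unit_hom]

end LeftAdjoint

theorem stmt13_general (F : C ⥤ D) (U : D ⥤ C) (OF : OpmonStr F) (OU : OpmonStr U)
    (adj : F ⊣ U)
    (hu : ∀ x y : C, adj.unit.app (x ⊗ y) ≫ U.map (OF.d x y) ≫ OU.d (F.obj x) (F.obj y)
      = adj.unit.app x ⊗ₘ adj.unit.app y)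
    (hu0 : adj.unit.app (𝟙_ C) ≫ U.map OF.e ≫ OU.e = 𝟙 (𝟙_ C))
    (ρM : RAct C M) (ρN : RAct D N)
    (G : M ⥤ N) (V : N ⥤ M) (adjGV : G ⊣ V)
    (cV : ComodStr U OU ρN ρM V)
    (δVinv : ∀ (n : N) (y : D), ρM.smul (V.obj n) (U.obj y) ⟶ V.obj (ρN.smul n y))
    (hinv₁ : ∀ (n : N) (y : D), cV.δ n y ≫ δVinv n y = 𝟙 (V.obj (ρN.smul n y)))
    (hinv₂ : ∀ (n : N) (y : D), δVinv n y ≫ cV.δ n y = 𝟙 (ρM.smul (V.obj n) (U.obj y))) :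
    let δG : ∀ (m : M) (x : C), G.obj (ρM.smul m x) ⟶ ρN.smul (G.obj m) (F.obj x) :=
      fun m x =>
        G.map (ρM.smulHom (adjGV.unit.app m) (adj.unit.app x)) ≫
          G.map (δVinv (G.obj m) (F.obj x)) ≫
            adjGV.counit.app (ρN.smul (G.obj m) (F.obj x))
    (∀ {m m' : M} {x x' : C} (f : m ⟶ m') (g : x ⟶ x'),
      G.map (ρM.smulHom f g) ≫ δG m' x' = δG m x ≫ ρN.smulHom (G.map f) (F.map g)) ∧
    (∀ (m : M) (x y : C),
      δG m (x ⊗ y) ≫ ρN.smulHom (𝟙 (G.obj m)) (OF.d x y) ≫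
          eqToHom (ρN.assoc (G.obj m) (F.obj x) (F.obj y)) =
        G.map (eqToHom (ρM.assoc m x y)) ≫ δG (ρM.smul m x) y ≫
          ρN.smulHom (δG m x) (𝟙 (F.obj y))) ∧
    (∀ m : M,
      δG m (𝟙_ C) ≫ ρN.smulHom (𝟙 (G.obj m)) OF.e ≫ eqToHom (ρN.unit (G.obj m)) =
        G.map (eqToHom (ρM.unit m))) := by
  intro δG
  exact ⟨leftAdjointCoaction_natural adj adjGV (cV.inv_natural hinv₁ hinv₂),
    leftAdjointCoaction_coassoc adj adjGV (cV.inv_natural hinv₁ hinv₂) hu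
      (cV.inv_coassoc hinv₁ hinv₂),
    leftAdjointCoaction_counital adj adjGV (cV.inv_natural hinv₁ hinv₂) hu0
      (cV.inv_counital hinv₂)⟩

/-- Given a monoidal adjunction `F ⊣ U`, an adjunction `G ⊣ V`, and a strong comodule
structure `δ^V` (with inverse `δVinv`) on `V` over `U`, the transformation
`δ^G_{m,x} = ε^{G⊣V} ∘ G((δ^V)⁻¹) ∘ G(η^{G⊣V}_m ◁ η^{F⊣U}_x)` is a natural,
coassociative and counital coaction making `G` a comodule functor over `F`. -/
theorem stmt13 (F : C ⥤ D) (U : D ⥤ C) (OF : OpmonStr F) (OU : OpmonStr U)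
    (adj : F ⊣ U)
    (hu : ∀ x y : C, adj.unit.app (x ⊗ y) ≫ U.map (OF.d x y) ≫ OU.d (F.obj x) (F.obj y)
      = adj.unit.app x ⊗ₘ adj.unit.app y)
    (hu0 : adj.unit.app (𝟙_ C) ≫ U.map OF.e ≫ OU.e = 𝟙 (𝟙_ C))
    (hc : ∀ x y : D, F.map (OU.d x y) ≫ OF.d (U.obj x) (U.obj y) ≫
      (adj.counit.app x ⊗ₘ adj.counit.app y) = adj.counit.app (x ⊗ y))
    (hc0 : F.map OU.e ≫ OF.e = adj.counit.app (𝟙_ D))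
    (ρM : RAct C M) (ρN : RAct D N)
    (G : M ⥤ N) (V : N ⥤ M) (adjGV : G ⊣ V)
    (cV : ComodStr U OU ρN ρM V)
    (δVinv : ∀ (n : N) (y : D), ρM.smul (V.obj n) (U.obj y) ⟶ V.obj (ρN.smul n y))
    (hinv₁ : ∀ (n : N) (y : D), cV.δ n y ≫ δVinv n y = 𝟙 (V.obj (ρN.smul n y)))
    (hinv₂ : ∀ (n : N) (y : D), δVinv n y ≫ cV.δ n y = 𝟙 (ρM.smul (V.obj n) (U.obj y))) :
    let δG : ∀ (m : M) (x : C), G.obj (ρM.smul m x) ⟶ ρN.smul (G.obj m) (F.obj x) :=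
      fun m x =>
        G.map (ρM.smulHom (adjGV.unit.app m) (adj.unit.app x)) ≫
          G.map (δVinv (G.obj m) (F.obj x)) ≫
            adjGV.counit.app (ρN.smul (G.obj m) (F.obj x))
    (∀ {m m' : M} {x x' : C} (f : m ⟶ m') (g : x ⟶ x'),
      G.map (ρM.smulHom f g) ≫ δG m' x' = δG m x ≫ ρN.smulHom (G.map f) (F.map g)) ∧
    (∀ (m : M) (x y : C),
      δG m (x ⊗ y) ≫ ρN.smulHom (𝟙 (G.obj m)) (OF.d x y) ≫
          eqToHom (ρN.assoc (G.obj m) (F.obj x) (F.obj y)) =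
        G.map (eqToHom (ρM.assoc m x y)) ≫ δG (ρM.smul m x) y ≫
          ρN.smulHom (δG m x) (𝟙 (F.obj y))) ∧
    (∀ m : M,
      δG m (𝟙_ C) ≫ ρN.smulHom (𝟙 (G.obj m)) OF.e ≫ eqToHom (ρN.unit (G.obj m)) =
        G.map (eqToHom (ρM.unit m))) :=
  stmt13_general F U OF OU adj hu hu0 ρM ρN G V adjGV cV δVinv hinv₁ hinv₂

end ComoduleAdjunctions
end

section
/- Let G ⊣ V be a comodule adjunction over a monoidal adjunction F ⊣ U. Then the composite K = VG is a comodule monad over the bimonad B = UF, with coaction at (m, x) given by V applied to δ^(G)_{m,x} followed by δ^(V)_{Gm, Fx} : VG(m ◁ x) → V(Gm ◀ Fx) → VGm ◁ UFx; i.e., this coaction is coassociative and counital with respect to the opmonoidal structure of B, and the multiplication V ε^{G⊣V} G and unit η^{G⊣V} of the monad VG are morphisms of comodule functors. -/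
/-! `B = UF` and `K = VG` carry the composite opmonoidal and comodule structures, and composites of
coassociative, counital structures are again coassociative and counital. The units of both monads
are compatible with the structure maps by the unit conditions of the two adjunctions. For the
multiplications `U ε F` and `V ε G`, naturality moves the counit past `δ^F` (resp. `δ^G`); the
counit condition then rewrites `ε` at `Gm ◁ Fx` as `G δ^V ≫ δ^G ≫ (ε ◁ ε)` (resp. at `Fx ⊗ Fy`),
and naturality of `δ^V` (resp. `d^U`) finishes. -/

open CategoryTheory Category MonoidalCategory

universe v₁ v₂ u₁ u₂

section ComoduleAdjunctions

variable {C : Type u₁} [Category.{v₁} C] [MonoidalCategory C]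
  {D : Type u₂} [Category.{v₂} D] [MonoidalCategory D]
  {M : Type u₁} [Category.{v₁} M] {N : Type u₂} [Category.{v₂} N]

universe v₃ u₃

variable {E : Type u₃} [Category.{v₃} E] [MonoidalCategory E] {P : Type u₃} [Category.{v₃} P]

namespace RAct

variable {A : Type*} [Category A] [MonoidalCategory A] {X : Type*} [Category X] (ρ : RAct A X)

theorem smulHom_comp_left {m m' m'' : X} (f : m ⟶ m') (f' : m' ⟶ m'') (x : A) :
    ρ.smulHom (f ≫ f') (𝟙 x) = ρ.smulHom f (𝟙 x) ≫ ρ.smulHom f' (𝟙 x) := by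
  rw [← ρ.smulHom_comp, comp_id]

theorem smulHom_comp_right (m : X) {x x' x'' : A} (g : x ⟶ x') (g' : x' ⟶ x'') :
    ρ.smulHom (𝟙 m) (g ≫ g') = ρ.smulHom (𝟙 m) g ≫ ρ.smulHom (𝟙 m) g' := by
  rw [← ρ.smulHom_comp, comp_id]

end RAct

namespace OpmonStr

variable {F : C ⥤ D} (OF : OpmonStr F)

theorem d_natural_whiskerRight {x x' : C} (f : x ⟶ x') (y : C) :
    F.map (f ▷ y) ≫ OF.d x' y = OF.d x y ≫ (F.map f ▷ F.obj y) := by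
  simpa using OF.d_natural f (𝟙 y)

theorem d_natural_whiskerLeft (x : C) {y y' : C} (g : y ⟶ y') :
    F.map (x ◁ g) ≫ OF.d x y' = OF.d x y ≫ (F.obj x ◁ F.map g) := by
  simpa using OF.d_natural (𝟙 x) g

def comp {U : D ⥤ E} (OU : OpmonStr U) : OpmonStr (F ⋙ U) where
  d x y := U.map (OF.d x y) ≫ OU.d (F.obj x) (F.obj y)
  e := U.map OF.e ≫ OU.e
  d_natural f g := by
    simp only [Functor.comp_map, ← U.map_comp_assoc, OF.d_natural, Functor.map_comp, assoc,
      OU.d_natural]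
  coassoc x y z := by
    have hF := congrArg U.map (OF.coassoc x y z)
    have hU := OU.coassoc (F.obj x) (F.obj y) (F.obj z)
    simp only [Functor.map_comp, tensorHom_id, id_tensorHom] at hF hU
    simp only [Functor.comp_obj, Functor.comp_map, tensorHom_id, id_tensorHom, comp_whiskerRight,
      whiskerLeft_comp, assoc]
    rw [reassoc_of% (OU.d_natural_whiskerRight (OF.d x y) (F.obj z)).symm, hU,
      reassoc_of% hF, reassoc_of% OU.d_natural_whiskerLeft]
  counit_left x := by
    have hF := congrArg U.map (OF.counit_left x)
    have hU := OU.counit_left (F.obj x)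
    simp only [Functor.map_comp, tensorHom_id] at hF hU
    simp only [Functor.comp_obj, Functor.comp_map, tensorHom_id, comp_whiskerRight, assoc]
    rw [reassoc_of% (OU.d_natural_whiskerRight OF.e (F.obj x)).symm, hU, hF]
  counit_right x := by
    have hF := congrArg U.map (OF.counit_right x)
    have hU := OU.counit_right (F.obj x)
    simp only [Functor.map_comp, id_tensorHom] at hF hU
    simp only [Functor.comp_obj, Functor.comp_map, id_tensorHom, whiskerLeft_comp, assoc]
    rw [reassoc_of% (OU.d_natural_whiskerLeft (F.obj x) OF.e).symm, hU, hF]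

end OpmonStr

namespace ComodStr

variable {F : C ⥤ D} {OF : OpmonStr F} {ρM : RAct C M} {ρN : RAct D N} {G : M ⥤ N}
  (cG : ComodStr F OF ρM ρN G)

theorem δ_natural_left {m m' : M} (f : m ⟶ m') (x : C) :
    G.map (ρM.smulHom f (𝟙 x)) ≫ cG.δ m' x = cG.δ m x ≫ ρN.smulHom (G.map f) (𝟙 (F.obj x)) := by
  simpa using cG.natural f (𝟙 x)

theorem δ_natural_right (m : M) {x x' : C} (g : x ⟶ x') :
    G.map (ρM.smulHom (𝟙 m) g) ≫ cG.δ m x' =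
      cG.δ m x ≫ ρN.smulHom (𝟙 (G.obj m)) (F.map g) := by
  simpa using cG.natural (𝟙 m) g

def comp {U : D ⥤ E} {OU : OpmonStr U} {ρP : RAct E P} {V : N ⥤ P}
    (cV : ComodStr U OU ρN ρP V) : ComodStr (F ⋙ U) (OF.comp OU) ρM ρP (G ⋙ V) where
  δ m x := V.map (cG.δ m x) ≫ cV.δ (G.obj m) (F.obj x)
  natural f g := by
    simp only [Functor.comp_map, ← V.map_comp_assoc, cG.natural, Functor.map_comp, assoc,
      cV.natural]
  coassoc m x y := by
    have hG := congrArg V.map (cG.coassoc m x y)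
    simp only [Functor.map_comp] at hG
    simp only [Functor.comp_obj, Functor.comp_map, OpmonStr.comp, ρP.smulHom_comp_right,
      ρP.smulHom_comp_left, assoc]
    rw [reassoc_of% (cV.δ_natural_right (G.obj m) (OF.d x y)).symm, cV.coassoc, reassoc_of% hG,
      reassoc_of% cV.δ_natural_left]
  counital m := by
    have hG := congrArg V.map (cG.counital m)
    simp only [Functor.map_comp] at hG
    simp only [Functor.comp_obj, Functor.comp_map, OpmonStr.comp, ρP.smulHom_comp_right, assoc]
    rw [reassoc_of% (cV.δ_natural_right (G.obj m) OF.e).symm, cV.counital, hG]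

end ComodStr

section MonoidalAdjunction

variable {F : C ⥤ D} {U : D ⥤ C}

/-- The paper's monoidal adjunction: unit and counit are opmonoidal transformations, where `F ⋙ U`
and `U ⋙ F` carry the composite opmonoidal structures. -/
structure IsOpmonoidalAdjunction (adj : F ⊣ U) (OF : OpmonStr F) (OU : OpmonStr U) : Prop where
  unit_d : ∀ x y : C, adj.unit.app (x ⊗ y) ≫ U.map (OF.d x y) ≫ OU.d (F.obj x) (F.obj y) =
    adj.unit.app x ⊗ₘ adj.unit.app y
  unit_e : adj.unit.app (𝟙_ C) ≫ U.map OF.e ≫ OU.e = 𝟙 (𝟙_ C)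
  counit_d : ∀ x y : D, F.map (OU.d x y) ≫ OF.d (U.obj x) (U.obj y) ≫
    (adj.counit.app x ⊗ₘ adj.counit.app y) = adj.counit.app (x ⊗ y)
  counit_e : F.map OU.e ≫ OF.e = adj.counit.app (𝟙_ D)

variable {adj : F ⊣ U} {OF : OpmonStr F} {OU : OpmonStr U}

def BimonadStr.ofAdjunction (h : IsOpmonoidalAdjunction adj OF OU) : BimonadStr adj.toMonad where
  op := OF.comp OU
  mul_opmon x y := by
    dsimp only [Adjunction.toMonad, Functor.comp_obj, Functor.comp_map, Functor.id_obj,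
      Functor.whiskerRight_app, Functor.whiskerLeft_app, OpmonStr.comp]
    rw [← U.map_comp_assoc, ← adj.counit_naturality, U.map_comp, assoc, ← h.counit_d]
    simp only [Functor.map_comp, assoc, OU.d_natural, Functor.id_obj]
  mul_counit := by
    dsimp only [Adjunction.toMonad, Functor.comp_obj, Functor.comp_map, Functor.id_obj,
      Functor.whiskerRight_app, Functor.whiskerLeft_app, OpmonStr.comp]
    rw [← U.map_comp_assoc, ← adj.counit_naturality, U.map_comp, assoc, ← h.counit_e]
    simp only [Functor.map_comp, assoc]
  unit_opmon := h.unit_d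
  unit_counit := h.unit_e

def Coaction.ofComodAdjLift {h : IsOpmonoidalAdjunction adj OF OU}
    {ρM : RAct C M} {ρN : RAct D N} {G : M ⥤ N} {V : N ⥤ M} {adjGV : G ⊣ V}
    (L : ComodAdjLift F U OF OU adj ρM ρN G V adjGV) :
    Coaction adj.toMonad (.ofAdjunction h) ρM adjGV.toMonad where
  __ := L.cG.comp L.cV
  mul_comod m x := by
    dsimp only [Adjunction.toMonad, Functor.comp_obj, Functor.comp_map, Functor.id_obj,
      Functor.whiskerRight_app, Functor.whiskerLeft_app, ComodStr.comp]
    rw [← V.map_comp_assoc, ← adjGV.counit_naturality, V.map_comp, assoc, ← L.counit_compat]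
    simp only [Functor.map_comp, assoc, L.cV.natural, Functor.id_obj]
  unit_comod := L.unit_compat

end MonoidalAdjunction

theorem stmt14_general {C : Type u₁} [Category.{v₁} C] [MonoidalCategory C]
    {D : Type u₁} [Category.{v₁} D] [MonoidalCategory D]
    {M : Type u₁} [Category.{v₁} M] {N : Type u₁} [Category.{v₁} N]
    (F : C ⥤ D) (U : D ⥤ C) (OF : OpmonStr F) (OU : OpmonStr U)
    (adj : F ⊣ U)
    (hu : ∀ x y : C, adj.unit.app (x ⊗ y) ≫ U.map (OF.d x y) ≫ OU.d (F.obj x) (F.obj y)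
      = adj.unit.app x ⊗ₘ adj.unit.app y)
    (hu0 : adj.unit.app (𝟙_ C) ≫ U.map OF.e ≫ OU.e = 𝟙 (𝟙_ C))
    (hc : ∀ x y : D, F.map (OU.d x y) ≫ OF.d (U.obj x) (U.obj y) ≫
      (adj.counit.app x ⊗ₘ adj.counit.app y) = adj.counit.app (x ⊗ y))
    (hc0 : F.map OU.e ≫ OF.e = adj.counit.app (𝟙_ D))
    (ρM : RAct C M) (ρN : RAct D N)
    (G : M ⥤ N) (V : N ⥤ M) (adjGV : G ⊣ V)
    (L : ComodAdjLift F U OF OU adj ρM ρN G V adjGV) :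
    ∃ (bs : BimonadStr adj.toMonad)
      (co : Coaction adj.toMonad bs ρM adjGV.toMonad),
      (∀ x y : C, bs.op.d x y = U.map (OF.d x y) ≫ OU.d (F.obj x) (F.obj y)) ∧
      (bs.op.e = U.map OF.e ≫ OU.e) ∧
      (∀ (m : M) (x : C),
        co.δ m x = V.map (L.cG.δ m x) ≫ L.cV.δ (G.obj m) (F.obj x)) :=
  ⟨.ofAdjunction ⟨hu, hu0, hc, hc0⟩, .ofComodAdjLift L, fun _ _ => rfl, rfl, fun _ _ => rfl⟩

/-- Let `G ⊣ V` be a comodule adjunction over a monoidal adjunction `F ⊣ U` (with `M` a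
right `C`-module category, here `D = C`-side categories in the same universes).  Then
`B = UF` is a bimonad and `K = VG` is a comodule monad over `B`, with coaction
`δ^V_{Gm,Fx} ∘ V δ^G_{m,x}` and whose multiplication `V ε G` and unit are morphisms of
comodule functors. -/
theorem stmt14 {C : Type u₁} [Category.{v₁} C] [MonoidalCategory C]
    {D : Type u₁} [Category.{v₁} D] [MonoidalCategory D]
    {M : Type u₁} [Category.{v₁} M] {N : Type u₁} [Category.{v₁} N]
    (F : C ⥤ D) (U : D ⥤ C) (OF : OpmonStr F) (OU : OpmonStr U)
    (adj : F ⊣ U)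
    (hd : ∀ x y : D, IsIso (OU.d x y)) (he : IsIso OU.e)
    (hu : ∀ x y : C, adj.unit.app (x ⊗ y) ≫ U.map (OF.d x y) ≫ OU.d (F.obj x) (F.obj y)
      = adj.unit.app x ⊗ₘ adj.unit.app y)
    (hu0 : adj.unit.app (𝟙_ C) ≫ U.map OF.e ≫ OU.e = 𝟙 (𝟙_ C))
    (hc : ∀ x y : D, F.map (OU.d x y) ≫ OF.d (U.obj x) (U.obj y) ≫
      (adj.counit.app x ⊗ₘ adj.counit.app y) = adj.counit.app (x ⊗ y))
    (hc0 : F.map OU.e ≫ OF.e = adj.counit.app (𝟙_ D))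
    (ρM : RAct C M) (ρN : RAct D N)
    (G : M ⥤ N) (V : N ⥤ M) (adjGV : G ⊣ V)
    (L : ComodAdjLift F U OF OU adj ρM ρN G V adjGV) :
    ∃ (bs : BimonadStr adj.toMonad)
      (co : Coaction adj.toMonad bs ρM adjGV.toMonad),
      (∀ x y : C, bs.op.d x y = U.map (OF.d x y) ≫ OU.d (F.obj x) (F.obj y)) ∧
      (bs.op.e = U.map OF.e ≫ OU.e) ∧
      (∀ (m : M) (x : C),
        co.δ m x = V.map (L.cG.δ m x) ≫ L.cV.δ (G.obj m) (F.obj x)) :=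
  stmt14_general F U OF OU adj hu hu0 hc hc0 ρM ρN G V adjGV L
end ComoduleAdjunctions
end

section
/- Let G ⊣ V be a comodule adjunction over a monoidal adjunction F ⊣ U, with induced comodule monad K = VG over the bimonad B = UF. Then the comparison functor Σ^K : N → M^K, n ↦ (Vn, V ε_n), is a strong comodule functor over the comparison functor Σ^B : D → C^B, and moreover U^K ∘ Σ^K = V and Σ^K ∘ G = F^K as comodule functors. -/
/-!
The coaction `δ^V` is a morphism of `K`-algebras because `counit_compat` rewrites `ε_{n ◀ y}`
through `G δ^V`, after which naturality of `δ^V` finishes. It is invertible for every comodule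
adjunction: its inverse is the mate `η ≫ V δ^G ≫ V (ε ◁ ε)`, and the two composites collapse by the
two compatibility squares followed by the triangle identities. The equalities `U^K Σ^K = V` and
`Σ^K G = F^K` hold definitionally for Mathlib's comparison functor.
-/

open CategoryTheory Category MonoidalCategory

universe v₁ v₂ u₁ u₂

section ComoduleAdjunctions

variable {C : Type u₁} [Category.{v₁} C] [MonoidalCategory C]
  {D : Type u₂} [Category.{v₂} D] [MonoidalCategory D]
  {M : Type u₁} [Category.{v₁} M] {N : Type u₂} [Category.{v₂} N]

namespace ComodAdjLift

variable {F : C ⥤ D} {U : D ⥤ C} {OF : OpmonStr F} {OU : OpmonStr U} {adj : F ⊣ U}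
  {ρM : RAct C M} {ρN : RAct D N} {G : M ⥤ N} {V : N ⥤ M} {adjGV : G ⊣ V}
  (L : ComodAdjLift F U OF OU adj ρM ρN G V adjGV)

theorem map_counit_comp_cV_δ (n : N) (y : D) :
    V.map (adjGV.counit.app (ρN.smul n y)) ≫ L.cV.δ n y =
      V.map (G.map (L.cV.δ n y)) ≫
        (V.map (L.cG.δ (V.obj n) (U.obj y)) ≫ L.cV.δ (G.obj (V.obj n)) (F.obj (U.obj y))) ≫
        ρM.smulHom (V.map (adjGV.counit.app n)) (U.map (adj.counit.app y)) := by
  have hδ := L.cV.natural (adjGV.counit.app n) (adj.counit.app y)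
  dsimp only [Functor.id_obj, Functor.comp_obj] at hδ
  rw [← L.counit_compat n y, Functor.map_comp, Functor.map_comp, assoc, assoc, assoc, hδ]

def cVδInv (n : N) (y : D) : ρM.smul (V.obj n) (U.obj y) ⟶ V.obj (ρN.smul n y) :=
  adjGV.unit.app _ ≫ V.map (L.cG.δ (V.obj n) (U.obj y)) ≫
    V.map (ρN.smulHom (adjGV.counit.app n) (adj.counit.app y))

theorem cV_δ_comp_cVδInv (n : N) (y : D) : L.cV.δ n y ≫ L.cVδInv n y = 𝟙 _ := by
  have hη := adjGV.unit.naturality (L.cV.δ n y)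
  dsimp only [Functor.id_obj, Functor.comp_obj, Functor.id_map, Functor.comp_map] at hη
  rw [cVδInv, reassoc_of% hη, ← Functor.map_comp, ← Functor.map_comp,
    L.counit_compat, adjGV.right_triangle_components]

theorem cVδInv_comp_cV_δ (n : N) (y : D) : L.cVδInv n y ≫ L.cV.δ n y = 𝟙 _ := by
  have hδ := L.cV.natural (adjGV.counit.app n) (adj.counit.app y)
  dsimp only [Functor.id_obj, Functor.comp_obj] at hδ
  rw [cVδInv, assoc, assoc, hδ, reassoc_of% L.unit_compat, ← ρM.smulHom_comp,
    adjGV.right_triangle_components, adj.right_triangle_components, ρM.smulHom_id]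

instance isIso_cV_δ_s15 (n : N) (y : D) : IsIso (L.cV.δ n y) :=
  ⟨⟨L.cVδInv n y, L.cV_δ_comp_cVδInv n y, L.cVδInv_comp_cV_δ n y⟩⟩

end ComodAdjLift

theorem stmt15_general (F : C ⥤ D) (U : D ⥤ C) (OF : OpmonStr F) (OU : OpmonStr U)
    (adj : F ⊣ U)
    (ρM : RAct C M) (ρN : RAct D N)
    (G : M ⥤ N) (V : N ⥤ M) (adjGV : G ⊣ V)
    (L : ComodAdjLift F U OF OU adj ρM ρN G V adjGV) :
    (∀ (n : N) (y : D),
      V.map (adjGV.counit.app (ρN.smul n y)) ≫ L.cV.δ n y =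
        V.map (G.map (L.cV.δ n y)) ≫
          (V.map (L.cG.δ (V.obj n) (U.obj y)) ≫
            L.cV.δ (G.obj (V.obj n)) (F.obj (U.obj y))) ≫
          ρM.smulHom (V.map (adjGV.counit.app n)) (U.map (adj.counit.app y))) ∧
    (∀ (n : N) (y : D), IsIso (L.cV.δ n y)) ∧
    (Monad.comparison adjGV ⋙ adjGV.toMonad.forget = V) ∧
    (G ⋙ Monad.comparison adjGV = adjGV.toMonad.free) :=
  ⟨L.map_counit_comp_cV_δ, L.isIso_cV_δ_s15, rfl, rfl⟩

/-- Let `G ⊣ V` be a comodule adjunction over a monoidal adjunction `F ⊣ U`, with induced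
comodule monad `K = VG` over the bimonad `B = UF`.  The comparison functor
`Σ^K : N ⥤ M^K`, `n ↦ (Vn, V ε_n)`, is a strong comodule functor over `Σ^B`: its
coaction is the lift of `δ^V` (i.e. `δ^V_{n,y}` is a morphism of `K`-algebras from
`Σ^K(n ◀ y)` to `Σ^K n ◁ Σ^B y`, and it is invertible); moreover `U^K ∘ Σ^K = V`
and `Σ^K ∘ G = F^K`. -/
theorem stmt15 (F : C ⥤ D) (U : D ⥤ C) (OF : OpmonStr F) (OU : OpmonStr U)
    (adj : F ⊣ U)
    (hd : ∀ x y : D, IsIso (OU.d x y)) (he : IsIso OU.e)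
    (hu : ∀ x y : C, adj.unit.app (x ⊗ y) ≫ U.map (OF.d x y) ≫ OU.d (F.obj x) (F.obj y)
      = adj.unit.app x ⊗ₘ adj.unit.app y)
    (hu0 : adj.unit.app (𝟙_ C) ≫ U.map OF.e ≫ OU.e = 𝟙 (𝟙_ C))
    (hc : ∀ x y : D, F.map (OU.d x y) ≫ OF.d (U.obj x) (U.obj y) ≫
      (adj.counit.app x ⊗ₘ adj.counit.app y) = adj.counit.app (x ⊗ y))
    (hc0 : F.map OU.e ≫ OF.e = adj.counit.app (𝟙_ D))
    (ρM : RAct C M) (ρN : RAct D N)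
    (G : M ⥤ N) (V : N ⥤ M) (adjGV : G ⊣ V)
    (L : ComodAdjLift F U OF OU adj ρM ρN G V adjGV) :
    (∀ (n : N) (y : D),
      V.map (adjGV.counit.app (ρN.smul n y)) ≫ L.cV.δ n y =
        V.map (G.map (L.cV.δ n y)) ≫
          (V.map (L.cG.δ (V.obj n) (U.obj y)) ≫
            L.cV.δ (G.obj (V.obj n)) (F.obj (U.obj y))) ≫
          ρM.smulHom (V.map (adjGV.counit.app n)) (U.map (adj.counit.app y))) ∧
    (∀ (n : N) (y : D), IsIso (L.cV.δ n y)) ∧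
    (Monad.comparison adjGV ⋙ adjGV.toMonad.forget = V) ∧
    (G ⋙ Monad.comparison adjGV = adjGV.toMonad.free) :=
  stmt15_general F U OF OU adj ρM ρN G V adjGV L
end ComoduleAdjunctions
end

section
/- Let B be a bimonad on a monoidal category C and K a monad on a right C-module category M. Then coactions of B on K making K a comodule monad are in bijection with right actions of C^B on M^K such that the forgetful functor U^K is a strict comodule functor over the strict monoidal forgetful functor U^B. -/
/-!
A coaction `δ` gives the action `(m, θ_m) ◁ (x, θ_x) = (m ◁ x, (θ_m ◁ θ_x) ∘ δ_{m,x})`: the algebra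
laws of this structure map are the comodule-monad axioms for `μ^K` and `η^K`, and its associativity
and unitality are coassociativity and counitality of `δ`.

Conversely, a lifted action determines `δ_{m,x}` as the free extension `K(m ◁ x) ⟶ K m ◁ t x` of
`η_m ◁ η_x` into the action of the free algebras `(K m, μ_m) ◁ (t x, μ_x)`. Its axioms come from
functoriality of the action in both variables, applied to the algebra morphisms `K f`, `t g`,
`d : t(x ⊗ y) ⟶ t x ⊗ t y`, `e : t 1 ⟶ 1` and `θ : (T A, μ_A) ⟶ (A, θ)`. Applied to `θ`, it shows
that `(θ_m ◁ θ_x) ∘ δ_{m,x}` is the structure map of the given action, so the two constructions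
are mutually inverse.
-/

open CategoryTheory Category MonoidalCategory

universe v₁ v₂ u₁ u₂

/-- A right action of `C^t` on `M^K` lifting the action of `C` on `M`, i.e. such that the
forgetful functor `U^K` is a strict comodule functor over the strict monoidal forgetful
functor `U^t`.  Associativity and unitality are stated via the canonical monoidal
structure of `C^t` determined by the bimonad `bs`. -/
structure LiftedAction {C : Type u₁} [Category.{v₁} C] [MonoidalCategory C]
    {M : Type u₁} [Category.{v₁} M]
    (t : Monad C) (bs : BimonadStr t) (ρ : RAct C M) (K : Monad M) where
  act : K.Algebra → t.Algebra → K.Algebra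
  actHom : ∀ {p p' : K.Algebra} {q q' : t.Algebra},
    (p ⟶ p') → (q ⟶ q') → (act p q ⟶ act p' q')
  actHom_id : ∀ (p : K.Algebra) (q : t.Algebra), actHom (𝟙 p) (𝟙 q) = 𝟙 (act p q)
  actHom_comp : ∀ {p p' p'' : K.Algebra} {q q' q'' : t.Algebra}
    (f : p ⟶ p') (f' : p' ⟶ p'') (g : q ⟶ q') (g' : q' ⟶ q''),
    actHom (f ≫ f') (g ≫ g') = actHom f g ≫ actHom f' g'
  strict_obj : ∀ (p : K.Algebra) (q : t.Algebra), (act p q).A = ρ.smul p.A q.A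
  strict_hom : ∀ {p p' : K.Algebra} {q q' : t.Algebra} (f : p ⟶ p') (g : q ⟶ q'),
    HEq (actHom f g).f (ρ.smulHom f.f g.f)
  assoc : ∀ (p : K.Algebra) (q q' : t.Algebra)
    (h₁ : t.η.app (q.A ⊗ q'.A) ≫ (bs.op.d q.A q'.A ≫ (q.a ⊗ₘ q'.a)) = 𝟙 (q.A ⊗ q'.A))
    (h₂ : t.μ.app (q.A ⊗ q'.A) ≫ (bs.op.d q.A q'.A ≫ (q.a ⊗ₘ q'.a)) =
      t.map (bs.op.d q.A q'.A ≫ (q.a ⊗ₘ q'.a)) ≫ (bs.op.d q.A q'.A ≫ (q.a ⊗ₘ q'.a))),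
    act p ⟨q.A ⊗ q'.A, bs.op.d q.A q'.A ≫ (q.a ⊗ₘ q'.a), h₁, h₂⟩ = act (act p q) q'
  unit : ∀ (p : K.Algebra)
    (h₁ : t.η.app (𝟙_ C) ≫ bs.op.e = 𝟙 (𝟙_ C))
    (h₂ : t.μ.app (𝟙_ C) ≫ bs.op.e = t.map bs.op.e ≫ bs.op.e),
    act p ⟨𝟙_ C, bs.op.e, h₁, h₂⟩ = p

namespace CategoryTheory.Monad

variable {D : Type u₂} [Category.{v₂} D]

/-- `T.free.obj X`, restated so that its carrier is reducibly `T.obj X`: `rw` has to see through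
it when free algebras meet the monad `K` itself. -/
abbrev freeAlg (T : Monad D) (X : D) : T.Algebra where
  A := T.obj X
  a := T.μ.app X
  unit := T.left_unit X
  assoc := (T.assoc X).symm

def freeAlgMap (T : Monad D) {X Y : D} (f : X ⟶ Y) : T.freeAlg X ⟶ T.freeAlg Y where
  f := T.map f
  h := T.μ.naturality f

@[simp] theorem freeAlgMap_f (T : Monad D) {X Y : D} (f : X ⟶ Y) : (T.freeAlgMap f).f = T.map f :=
  rfl

namespace Algebra

variable {T : Monad D}

theorem ext_of_heq {X Y : T.Algebra} (h : X.A = Y.A) (h' : HEq X.a Y.a) : X = Y := by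
  cases X; cases Y
  cases h; cases eq_of_heq h'
  rfl

theorem Hom.heq_of_heq_f {X X' Y Y' : T.Algebra} (hX : X = X') (hY : Y = Y')
    {u : X ⟶ Y} {v : X' ⟶ Y'} (h : HEq u.f v.f) : HEq u v := by
  subst hX hY
  exact heq_of_eq (Hom.ext (eq_of_heq h))

def transport (r : T.Algebra) {X : D} (h : r.A = X) : T.Algebra where
  A := X
  a := eqToHom (congrArg T.obj h).symm ≫ r.a ≫ eqToHom h
  unit := by subst h; simpa using r.unit
  assoc := by subst h; simpa using r.assoc

theorem transport_eq (r : T.Algebra) {X : D} (h : r.A = X) : r.transport h = r := by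
  subst h
  exact ext_of_heq rfl (heq_of_eq (by simp [transport]))

def Hom.transport {r r' : T.Algebra} (g : r ⟶ r') {X X' : D} (h : r.A = X) (h' : r'.A = X') :
    r.transport h ⟶ r'.transport h' where
  f := eqToHom h.symm ≫ g.f ≫ eqToHom h'
  h := by subst h h'; simp [Algebra.transport]

def freeLift (r : T.Algebra) {X : D} (f : X ⟶ r.A) : T.freeAlg X ⟶ r where
  f := T.map f ≫ r.a
  h := by
    rw [Functor.map_comp, Category.assoc, ← r.assoc, ← T.mu_naturality_assoc]

@[simp] theorem freeLift_f (r : T.Algebra) {X : D} (f : X ⟶ r.A) :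
    (freeLift r f).f = T.map f ≫ r.a := rfl

theorem unit_comp_freeLift_f (r : T.Algebra) {X : D} (f : X ⟶ r.A) :
    T.η.app X ≫ (freeLift r f).f = f := by
  rw [freeLift_f, ← T.η.naturality_assoc, r.unit]
  exact Category.comp_id f

def structHom (p : T.Algebra) : T.freeAlg p.A ⟶ p where
  f := p.a
  h := p.assoc.symm

@[simp] theorem structHom_f (p : T.Algebra) : (structHom p).f = p.a := rfl

end Algebra

end CategoryTheory.Monad

namespace BimonadStr

variable {C : Type u₁} [Category.{v₁} C] [MonoidalCategory C] {t : Monad C} (bs : BimonadStr t)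

abbrev algTensor (q q' : t.Algebra) : t.Algebra where
  A := q.A ⊗ q'.A
  a := bs.op.d q.A q'.A ≫ (q.a ⊗ₘ q'.a)
  unit := by
    rw [← Category.assoc, bs.unit_opmon, tensorHom_comp_tensorHom, q.unit, q'.unit]
    exact id_tensorHom_id _ _
  assoc := by
    rw [← Category.assoc, bs.mul_opmon, Category.assoc, Category.assoc, tensorHom_comp_tensorHom,
      q.assoc, q'.assoc, ← tensorHom_comp_tensorHom, ← reassoc_of% (bs.op.d_natural q.a q'.a),
      Functor.map_comp, Category.assoc]

abbrev algUnit : t.Algebra where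
  A := 𝟙_ C
  a := bs.op.e
  unit := bs.unit_counit
  assoc := bs.mul_counit

def dHom (x y : C) : t.freeAlg (x ⊗ y) ⟶ bs.algTensor (t.freeAlg x) (t.freeAlg y) where
  f := bs.op.d x y
  h := (bs.mul_opmon x y).symm

def eHom : t.freeAlg (𝟙_ C) ⟶ bs.algUnit where
  f := bs.op.e
  h := bs.mul_counit.symm

@[simp] theorem dHom_f (x y : C) : (bs.dHom x y).f = bs.op.d x y := rfl

@[simp] theorem eHom_f : bs.eHom.f = bs.op.e := rfl

end BimonadStr

variable {C : Type u₁} [Category.{v₁} C] [MonoidalCategory C]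
  {M : Type u₁} [Category.{v₁} M] {t : Monad C} {bs : BimonadStr t} {ρ : RAct C M} {K : Monad M}

namespace Coaction

theorem ext {c₁ c₂ : Coaction t bs ρ K} (h : ∀ m x, c₁.δ m x = c₂.δ m x) :
    c₁ = c₂ := by
  obtain ⟨δ₁⟩ := c₁
  obtain ⟨δ₂⟩ := c₂
  obtain rfl : δ₁ = δ₂ := funext fun m => funext (h m)
  rfl

variable (co : Coaction t bs ρ K)

def actObj (p : K.Algebra) (q : t.Algebra) : K.Algebra where
  A := ρ.smul p.A q.A
  a := co.δ p.A q.A ≫ ρ.smulHom p.a q.a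
  unit := by
    rw [← Category.assoc, co.unit_comod, ← ρ.smulHom_comp, p.unit, q.unit]
    exact ρ.smulHom_id _ _
  assoc := by
    rw [← Category.assoc, co.mul_comod, Category.assoc, Category.assoc, ← ρ.smulHom_comp,
      p.assoc, q.assoc, ρ.smulHom_comp, ← reassoc_of% (co.natural p.a q.a), Functor.map_comp,
      Category.assoc]

def actHom {p p' : K.Algebra} {q q' : t.Algebra} (u : p ⟶ p') (v : q ⟶ q') :
    co.actObj p q ⟶ co.actObj p' q' where
  f := ρ.smulHom u.f v.f
  h := by
    dsimp only [actObj]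
    rw [reassoc_of% (co.natural u.f v.f), ← ρ.smulHom_comp, u.h, v.h, ρ.smulHom_comp,
      Category.assoc]

theorem actObj_algTensor (p : K.Algebra) (q q' : t.Algebra) :
    co.actObj p (bs.algTensor q q') = co.actObj (co.actObj p q) q' := by
  refine Monad.Algebra.ext_of_heq (ρ.assoc p.A q.A q'.A)
    ((conj_eqToHom_iff_heq _ _ (congrArg K.obj (ρ.assoc p.A q.A q'.A))
      (ρ.assoc p.A q.A q'.A)).mp ?_)
  dsimp only [actObj]
  have hs : ρ.smulHom p.a (bs.op.d q.A q'.A ≫ (q.a ⊗ₘ q'.a)) =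
      ρ.smulHom (𝟙 (K.obj p.A)) (bs.op.d q.A q'.A) ≫ ρ.smulHom p.a (q.a ⊗ₘ q'.a) := by
    rw [← ρ.smulHom_comp, Category.id_comp]
  rw [hs, ρ.assoc_hom, reassoc_of% (co.coassoc p.A q.A q'.A),
    ← Category.assoc (ρ.smulHom (co.δ p.A q.A) _), ← ρ.smulHom_comp, Category.id_comp,
    eqToHom_map, Category.assoc]

theorem actObj_algUnit (p : K.Algebra) : co.actObj p bs.algUnit = p := by
  refine Monad.Algebra.ext_of_heq (ρ.unit p.A)
    ((conj_eqToHom_iff_heq _ _ (congrArg K.obj (ρ.unit p.A)) (ρ.unit p.A)).mp ?_)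
  dsimp only [actObj]
  have hs : ρ.smulHom p.a bs.op.e =
      ρ.smulHom (𝟙 (K.obj p.A)) bs.op.e ≫ ρ.smulHom p.a (𝟙 (𝟙_ C)) := by
    rw [← ρ.smulHom_comp, Category.id_comp, Category.comp_id]
  rw [hs, ρ.unit_hom, reassoc_of% (co.counital p.A), eqToHom_map]

def toLiftedAction : LiftedAction t bs ρ K where
  act := co.actObj
  actHom := co.actHom
  actHom_id p q := Monad.Algebra.Hom.ext (ρ.smulHom_id p.A q.A)
  actHom_comp f f' g g' := Monad.Algebra.Hom.ext (ρ.smulHom_comp f.f f'.f g.f g'.f)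
  strict_obj _ _ := rfl
  strict_hom _ _ := HEq.rfl
  assoc p q q' _ _ := co.actObj_algTensor p q q'
  unit p _ _ := co.actObj_algUnit p

end Coaction

namespace LiftedAction

theorem ext {L₁ L₂ : LiftedAction t bs ρ K} (h : ∀ p q, L₁.act p q = L₂.act p q)
    (h' : ∀ {p p' : K.Algebra} {q q' : t.Algebra} (u : p ⟶ p') (v : q ⟶ q'),
      HEq (L₁.actHom u v) (L₂.actHom u v)) : L₁ = L₂ := by
  obtain ⟨act₁, actHom₁⟩ := L₁
  obtain ⟨act₂, actHom₂⟩ := L₂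
  obtain rfl : act₁ = act₂ := funext fun p => funext (h p)
  obtain rfl : @actHom₁ = @actHom₂ := by
    funext p p' q q' u v
    exact eq_of_heq (h' u v)
  rfl

variable (L : LiftedAction t bs ρ K)

theorem actHom_f {p p' : K.Algebra} {q q' : t.Algebra} (u : p ⟶ p') (v : q ⟶ q') :
    (L.actHom u v).f =
      eqToHom (L.strict_obj p q) ≫ ρ.smulHom u.f v.f ≫ eqToHom (L.strict_obj p' q').symm :=
  (conj_eqToHom_iff_heq _ _ (L.strict_obj p q) (L.strict_obj p' q')).2 (L.strict_hom u v)

/-- `L.act p q` has carrier `p.A ◁ q.A` only propositionally; `smulMap` and `smulAlg` move its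
structure map onto that carrier. -/
def smulMap (p : K.Algebra) (q : t.Algebra) : K.obj (ρ.smul p.A q.A) ⟶ ρ.smul p.A q.A :=
  eqToHom (congrArg K.obj (L.strict_obj p q)).symm ≫ (L.act p q).a ≫ eqToHom (L.strict_obj p q)

abbrev smulAlg (p : K.Algebra) (q : t.Algebra) : K.Algebra where
  A := ρ.smul p.A q.A
  a := L.smulMap p q
  unit := ((L.act p q).transport (L.strict_obj p q)).unit
  assoc := ((L.act p q).transport (L.strict_obj p q)).assoc

theorem smulAlg_eq (p : K.Algebra) (q : t.Algebra) : L.smulAlg p q = L.act p q :=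
  Monad.Algebra.transport_eq _ _

def smulAlgHom {p p' : K.Algebra} {q q' : t.Algebra} (u : p ⟶ p') (v : q ⟶ q') :
    L.smulAlg p q ⟶ L.smulAlg p' q' :=
  (L.actHom u v).transport (L.strict_obj p q) (L.strict_obj p' q')

@[simp] theorem smulAlgHom_f {p p' : K.Algebra} {q q' : t.Algebra} (u : p ⟶ p') (v : q ⟶ q') :
    (L.smulAlgHom u v).f = ρ.smulHom u.f v.f := by
  simp [smulAlgHom, Monad.Algebra.Hom.transport, Monad.Algebra.transport, actHom_f]

theorem smulMap_natural {p p' : K.Algebra} {q q' : t.Algebra} (u : p ⟶ p') (v : q ⟶ q') :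
    K.map (ρ.smulHom u.f v.f) ≫ L.smulMap p' q' = L.smulMap p q ≫ ρ.smulHom u.f v.f := by
  simpa using (L.smulAlgHom u v).h

theorem smulMap_comp_eqToHom {p : K.Algebra} {q : t.Algebra} {r : K.Algebra} (e : L.act p q = r)
    (h : ρ.smul p.A q.A = r.A) : L.smulMap p q ≫ eqToHom h = K.map (eqToHom h) ≫ r.a := by
  subst e
  simp [smulMap, eqToHom_map]

theorem smulMap_algUnit (p : K.Algebra) :
    L.smulMap p bs.algUnit ≫ eqToHom (ρ.unit p.A) = K.map (eqToHom (ρ.unit p.A)) ≫ p.a :=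
  L.smulMap_comp_eqToHom (L.unit p bs.unit_counit bs.mul_counit) _

theorem smulMap_algTensor (p : K.Algebra) (q q' : t.Algebra) :
    L.smulMap p (bs.algTensor q q') ≫ eqToHom (ρ.assoc p.A q.A q'.A) =
      K.map (eqToHom (ρ.assoc p.A q.A q'.A)) ≫ L.smulMap (L.smulAlg p q) q' := by
  refine L.smulMap_comp_eqToHom (r := L.smulAlg (L.smulAlg p q) q') ?_ _
  rw [L.smulAlg_eq, L.smulAlg_eq, L.assoc p q q' (bs.algTensor q q').unit (bs.algTensor q q').assoc]

/-- The coaction `δ_{m,x}` of a lifted action is the free extension of `η_m ◁ η_x`. -/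
def coactionHom (m : M) (x : C) :
    K.freeAlg (ρ.smul m x) ⟶ L.smulAlg (K.freeAlg m) (t.freeAlg x) :=
  Monad.Algebra.freeLift _ (ρ.smulHom (K.η.app m) (t.η.app x))

theorem coactionHom_f (m : M) (x : C) :
    (L.coactionHom m x).f =
      K.map (ρ.smulHom (K.η.app m) (t.η.app x)) ≫ L.smulMap (K.freeAlg m) (t.freeAlg x) :=
  rfl

theorem unit_comp_coactionHom_f (m : M) (x : C) :
    K.η.app (ρ.smul m x) ≫ (L.coactionHom m x).f = ρ.smulHom (K.η.app m) (t.η.app x) :=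
  Monad.Algebra.unit_comp_freeLift_f _ _

theorem coactionHom_f_comp_smulHom (p : K.Algebra) (q : t.Algebra) :
    (L.coactionHom p.A q.A).f ≫ ρ.smulHom p.a q.a = L.smulMap p q := by
  have h := L.smulMap_natural (Monad.Algebra.structHom p) (Monad.Algebra.structHom q)
  simp only [Monad.Algebra.structHom_f] at h
  rw [coactionHom_f, Category.assoc, ← h, ← Functor.map_comp_assoc, ← ρ.smulHom_comp,
    p.unit, q.unit]
  simp [ρ.smulHom_id]

theorem coactionHom_f_natural {m m' : M} {x x' : C} (f : m ⟶ m') (g : x ⟶ x') :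
    K.map (ρ.smulHom f g) ≫ (L.coactionHom m' x').f =
      (L.coactionHom m x).f ≫ ρ.smulHom (K.map f) (t.map g) := by
  have h := L.smulMap_natural (K.freeAlgMap f) (t.freeAlgMap g)
  simp only [Monad.freeAlgMap_f] at h
  rw [coactionHom_f, coactionHom_f, Category.assoc, ← h, ← Functor.map_comp_assoc,
    ← Functor.map_comp_assoc, ← ρ.smulHom_comp, ← ρ.smulHom_comp,
    K.unit_naturality, t.unit_naturality]

theorem coactionHom_f_mul_comod (m : M) (x : C) :
    K.μ.app (ρ.smul m x) ≫ (L.coactionHom m x).f =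
      K.map (L.coactionHom m x).f ≫ (L.coactionHom (K.obj m) (t.obj x)).f ≫
        ρ.smulHom (K.μ.app m) (t.μ.app x) := by
  rw [L.coactionHom_f_comp_smulHom (K.freeAlg m) (t.freeAlg x)]
  exact ((L.coactionHom m x).h).symm

theorem coactionHom_f_counital (m : M) :
    (L.coactionHom m (𝟙_ C)).f ≫ ρ.smulHom (𝟙 (K.obj m)) bs.op.e ≫
        eqToHom (ρ.unit (K.obj m)) =
      K.map (eqToHom (ρ.unit m)) := by
  have h := L.smulMap_natural (𝟙 (K.freeAlg m)) bs.eHom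
  simp only [Monad.Algebra.id_f, BimonadStr.eHom_f] at h
  rw [coactionHom_f, Category.assoc, ← reassoc_of% h, L.smulMap_algUnit,
    ← Functor.map_comp_assoc, ← Functor.map_comp_assoc, ← ρ.smulHom_comp,
    Category.comp_id, bs.unit_counit, ρ.unit_hom]
  simp [eqToHom_map]

theorem coactionHom_f_coassoc (m : M) (x y : C) :
    (L.coactionHom m (x ⊗ y)).f ≫ ρ.smulHom (𝟙 (K.obj m)) (bs.op.d x y) ≫
        eqToHom (ρ.assoc (K.obj m) (t.obj x) (t.obj y)) =
      K.map (eqToHom (ρ.assoc m x y)) ≫ (L.coactionHom (ρ.smul m x) y).f ≫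
        ρ.smulHom (L.coactionHom m x).f (𝟙 (t.obj y)) := by
  have hl := L.smulMap_natural (𝟙 (K.freeAlg m)) (bs.dHom x y)
  have hr := L.smulMap_natural (L.coactionHom m x) (𝟙 (t.freeAlg y))
  simp only [Monad.Algebra.id_f, BimonadStr.dHom_f] at hl hr
  have lhs : (L.coactionHom m (x ⊗ y)).f ≫ ρ.smulHom (𝟙 (K.obj m)) (bs.op.d x y) ≫
        eqToHom (ρ.assoc (K.obj m) (t.obj x) (t.obj y)) =
      K.map (eqToHom (ρ.assoc m x y)) ≫
        K.map (ρ.smulHom (ρ.smulHom (K.η.app m) (t.η.app x)) (t.η.app y)) ≫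
          L.smulMap (L.smulAlg (K.freeAlg m) (t.freeAlg x)) (t.freeAlg y) := by
    rw [coactionHom_f, Category.assoc, ← reassoc_of% hl, L.smulMap_algTensor,
      ← Functor.map_comp_assoc, ← Functor.map_comp_assoc, ← ρ.smulHom_comp,
      Category.comp_id, bs.unit_opmon, ρ.assoc_hom]
    simp [eqToHom_map]
  rw [lhs]
  congr 1
  rw [L.coactionHom_f (ρ.smul m x), Category.assoc, ← hr, ← Functor.map_comp_assoc,
    ← ρ.smulHom_comp, Category.comp_id, unit_comp_coactionHom_f]

def toCoaction : Coaction t bs ρ K where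
  δ m x := (L.coactionHom m x).f
  natural := L.coactionHom_f_natural
  coassoc := L.coactionHom_f_coassoc
  counital := L.coactionHom_f_counital
  mul_comod := L.coactionHom_f_mul_comod
  unit_comod := L.unit_comp_coactionHom_f

theorem toCoaction_toLiftedAction : L.toCoaction.toLiftedAction = L := by
  have hact (p : K.Algebra) (q : t.Algebra) : L.toCoaction.actObj p q = L.act p q := by
    rw [← L.smulAlg_eq]
    exact Monad.Algebra.ext_of_heq rfl (heq_of_eq (L.coactionHom_f_comp_smulHom p q))
  refine ext hact fun u v => ?_
  exact Monad.Algebra.Hom.heq_of_heq_f (hact _ _) (hact _ _) (L.strict_hom u v).symm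

end LiftedAction

namespace Coaction

variable (co : Coaction t bs ρ K)

theorem toLiftedAction_smulMap (p : K.Algebra) (q : t.Algebra) :
    co.toLiftedAction.smulMap p q = co.δ p.A q.A ≫ ρ.smulHom p.a q.a := by
  change 𝟙 _ ≫ _ ≫ 𝟙 _ = _
  exact (Category.id_comp _).trans (Category.comp_id _)

theorem toLiftedAction_toCoaction : co.toLiftedAction.toCoaction = co := by
  refine ext fun m x => ?_
  change K.map _ ≫ co.toLiftedAction.smulMap (K.freeAlg m) (t.freeAlg x) = _
  rw [toLiftedAction_smulMap, ← Category.assoc, co.natural, Category.assoc,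
    ← ρ.smulHom_comp, K.right_unit, t.right_unit]
  simp [ρ.smulHom_id]

end Coaction

def coactionEquivLiftedAction : Coaction t bs ρ K ≃ LiftedAction t bs ρ K where
  toFun := Coaction.toLiftedAction
  invFun := LiftedAction.toCoaction
  left_inv := Coaction.toLiftedAction_toCoaction
  right_inv := LiftedAction.toCoaction_toLiftedAction

/-- For a bimonad `(t, bs)` on `C` and a monad `K` on a right `C`-module category `M`,
coactions of the bimonad on `K` (making `K` a comodule monad) are in bijection with
right actions of `C^t` on `M^K` for which `U^K` is a strict comodule functor over the
strict monoidal forgetful functor `U^t`; the bijection sends a coaction `δ` to the action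
`(m, θ_m) ◁ (x, θ_x) = (m ◁ x, (θ_m ◁ θ_x) ∘ δ_{m,x})`. -/
theorem stmt16 {C : Type u₁} [Category.{v₁} C] [MonoidalCategory C]
    {M : Type u₁} [Category.{v₁} M]
    (t : Monad C) (bs : BimonadStr t) (ρ : RAct C M) (K : Monad M) :
    ∃ e : Coaction t bs ρ K ≃ LiftedAction t bs ρ K,
      ∀ (co : Coaction t bs ρ K) (p : K.Algebra) (q : t.Algebra),
        ((e co).act p q).A = ρ.smul p.A q.A ∧
        HEq ((e co).act p q).a (co.δ p.A q.A ≫ ρ.smulHom p.a q.a) :=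
  ⟨coactionEquivLiftedAction, fun _ _ _ => ⟨rfl, HEq.rfl⟩⟩
end
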